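/- arXiv:1105.5954 — 8 statements merged into one kernel-verified Lean document; each statement's English description precedes it below -/
import Mathlib

section
/- The discrete HJB equation has exactly one solution: there exists a unique vector x ∈ ℝ^N such that min_{u∈U}{A_u x − b_u} = 0, i.e. for every component i one has min_{u∈U}(A_u x − b_u)_i = 0. -/
/-!
Fix a step `l > 0` with `l * (A_u)ᵢᵢ ≤ 1` for all `u` and `i`. Componentwise,
`x - l • min_u (A_u x - b_u) = max_u (x - l • (A_u x - b_u))`, and strict diagonal dominance makes
each affine map `x ↦ x - l • (A_u x - b_u)` a sup-norm contraction with factor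
`1 - l * (row margin of A_u) ≤ 1 - l * δ`, where compactness of `U` gives a uniform margin `δ > 0`.
A maximum of such maps is again a contraction, and its fixed points are exactly the solutions of
the HJB equation, so Banach's fixed point theorem gives existence and uniqueness.
-/

open Matrix Filter

/-- The set `K^o_N`: Z-matrices (non-positive off-diagonal entries) which are
strictly diagonally dominant. -/
def KoMat {N : ℕ} (A : Matrix (Fin N) (Fin N) ℝ) : Prop :=
  (∀ r s, r ≠ s → A r s ≤ 0) ∧
  ∀ r, ∑ s ∈ Finset.univ.erase r, |A r s| < A r r

open Finset

theorem existsUnique_eq_zero_of_contractingWith {E : Type*} [NormedAddCommGroup E]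
    [Module ℝ E] [CompleteSpace E] {f : E → E} {l : ℝ} (hl : l ≠ 0) {K : NNReal}
    (hf : ContractingWith K fun x => x - l • f x) :
    ∃! x, f x = 0 := by
  have hfix : ∀ x, Function.IsFixedPt (fun x => x - l • f x) x ↔ f x = 0 := fun x => by
    rw [Function.IsFixedPt, sub_eq_self, smul_eq_zero, or_iff_right hl]
  simp_rw [← hfix]
  exact ⟨_, hf.fixedPoint_isFixedPt, fun y hy => hf.fixedPoint_unique hy⟩

section RowDominance

variable {ι : Type*} [Fintype ι] [DecidableEq ι]

def rowGap (A : Matrix ι ι ℝ) (i : ι) : ℝ :=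
  A i i - ∑ j ∈ univ.erase i, |A i j|

theorem abs_sub_mul_mulVec_apply_le (A : Matrix ι ι ℝ) (z : ι → ℝ) (i : ι) {l : ℝ}
    (hl : 0 ≤ l) (hli : l * A i i ≤ 1) :
    |z i - l * (A *ᵥ z) i| ≤ (1 - l * rowGap A i) * ‖z‖ := by
  have hsplit : z i - l * (A *ᵥ z) i
      = (1 - l * A i i) * z i - l * ∑ j ∈ univ.erase i, A i j * z j := by
    rw [mulVec, dotProduct, ← add_sum_erase _ _ (mem_univ i)]
    ring
  have hoff : |∑ j ∈ univ.erase i, A i j * z j| ≤ (∑ j ∈ univ.erase i, |A i j|) * ‖z‖ := by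
    rw [sum_mul]
    refine (abs_sum_le_sum_abs _ _).trans (sum_le_sum fun j _ => ?_)
    rw [abs_mul]
    gcongr
    exact norm_le_pi_norm z j
  calc |z i - l * (A *ᵥ z) i|
      ≤ |(1 - l * A i i) * z i| + |l * ∑ j ∈ univ.erase i, A i j * z j| := by
        rw [hsplit]; exact abs_sub _ _
    _ ≤ (1 - l * A i i) * ‖z‖ + l * ((∑ j ∈ univ.erase i, |A i j|) * ‖z‖) := by
        rw [abs_mul, abs_mul, abs_of_nonneg (sub_nonneg.2 hli), abs_of_nonneg hl]
        gcongr
        exact norm_le_pi_norm z i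
    _ = (1 - l * rowGap A i) * ‖z‖ := by
        rw [rowGap]; ring

end RowDominance

theorem KoMat.rowGap_pos {N : ℕ} {A : Matrix (Fin N) (Fin N) ℝ} (hA : KoMat A) (i : Fin N) :
    0 < rowGap A i :=
  sub_pos.2 (hA.2 i)

section Compactness

variable {U ι : Type*} [TopologicalSpace U] {A : U → Matrix ι ι ℝ} {S : Set U}

theorem exists_pos_forall_mul_diag_le_one [Finite ι] (hS : IsCompact S) (hA : ContinuousOn A S) :
    ∃ l > 0, ∀ u ∈ S, ∀ i, l * A u i i ≤ 1 := by
  obtain ⟨M, hM⟩ : BddAbove (⋃ i, (fun u => A u i i) '' S) :=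
    (isCompact_iUnion fun i =>
      hS.image_of_continuousOn ((continuous_id.matrix_elem i i).comp_continuousOn hA)).bddAbove
  refine ⟨1 / max M 1, by positivity, fun u hu i => ?_⟩
  rw [one_div_mul_eq_div, div_le_one (by positivity)]
  exact (hM (Set.mem_iUnion.2 ⟨i, u, hu, rfl⟩)).trans (le_max_left M 1)

theorem exists_pos_forall_le_rowGap [Fintype ι] [DecidableEq ι] (hS : IsCompact S)
    (hA : ContinuousOn A S) (hdom : ∀ u ∈ S, ∀ i, 0 < rowGap (A u) i) :
    ∃ δ > 0, ∀ u ∈ S, ∀ i, δ ≤ rowGap (A u) i := by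
  have hgap : ∀ i, ContinuousOn (fun u => rowGap (A u) i) S := fun i =>
    ((continuous_id.matrix_elem i i).comp_continuousOn hA).sub <|
      continuousOn_finsetSum _ fun j _ =>
        ((continuous_id.matrix_elem i j).comp_continuousOn hA).abs
  obtain ⟨δ, hδ, hle⟩ :=
    (isCompact_iUnion fun i => hS.image_of_continuousOn (hgap i)).exists_forall_le'
      continuousOn_id (a := 0) fun _ hk => by
        obtain ⟨i, u, hu, rfl⟩ := Set.mem_iUnion.1 hk
        exact hdom u hu i
  exact ⟨δ, hδ, fun u hu i => hle _ (Set.mem_iUnion.2 ⟨i, u, hu, rfl⟩)⟩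

end Compactness

section HJB

variable {U ι : Type*} [Fintype ι] (A : U → Matrix ι ι ℝ) (B : U → ι → ℝ) (S : Set U)

/-- Componentwise `min_{u ∈ S} (A u x - B u)`; the `sInf` is a junk value unless the infimum is
attained, as it is for compact nonempty `S` and continuous `A`, `B` (`isLeast_hjbMin`). -/
noncomputable def hjbMin (x : ι → ℝ) : ι → ℝ :=
  fun i => sInf ((fun u => (A u *ᵥ x - B u) i) '' S)

theorem isLeast_hjbMin [TopologicalSpace U] (hS : IsCompact S) (hS₀ : S.Nonempty)
    (hA : ContinuousOn A S) (hB : ContinuousOn B S) (x : ι → ℝ) (i : ι) :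
    IsLeast ((fun u => (A u *ᵥ x - B u) i) '' S) (hjbMin A B S x i) := by
  have hcont : ContinuousOn (fun u => (A u *ᵥ x - B u) i) S :=
    (continuous_apply i).comp_continuousOn
      (((continuous_id.matrix_mulVec continuous_const).comp_continuousOn hA).sub hB)
  exact (hS.image_of_continuousOn hcont).isLeast_sInf (hS₀.image _)

variable {A B S} [DecidableEq ι]

theorem lipschitzWith_sub_smul_hjbMin
    (hmin : ∀ x i, IsLeast ((fun u => (A u *ᵥ x - B u) i) '' S) (hjbMin A B S x i))
    {l : ℝ} {K : NNReal} (hl : 0 ≤ l) (hdiag : ∀ u ∈ S, ∀ i, l * A u i i ≤ 1)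
    (hK : ∀ u ∈ S, ∀ i, 1 - l * rowGap (A u) i ≤ K) :
    LipschitzWith K fun x => x - l • hjbMin A B S x := by
  have hstep : ∀ x y i,
      (x - l • hjbMin A B S x) i - (y - l • hjbMin A B S y) i ≤ K * dist x y := by
    intro x y i
    obtain ⟨u, hu, hux⟩ := (hmin x i).1
    have huy : hjbMin A B S y i ≤ (A u *ᵥ y - B u) i := (hmin y i).2 ⟨u, hu, rfl⟩
    have hrow := abs_sub_mul_mulVec_apply_le (A u) (x - y) i hl (hdiag u hu i)
    simp only [mulVec_sub, Pi.sub_apply, Pi.smul_apply, smul_eq_mul] at hux huy hrow ⊢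
    calc x i - l * hjbMin A B S x i - (y i - l * hjbMin A B S y i)
        ≤ x i - y i - l * ((A u *ᵥ x) i - (A u *ᵥ y) i) := by
          rw [← hux]; linarith [mul_le_mul_of_nonneg_left huy hl]
      _ ≤ |x i - y i - l * ((A u *ᵥ x) i - (A u *ᵥ y) i)| := le_abs_self _
      _ ≤ (1 - l * rowGap (A u) i) * ‖x - y‖ := hrow
      _ ≤ K * dist x y := by rw [dist_eq_norm]; gcongr; exact hK u hu i
  refine LipschitzWith.of_dist_le_mul fun x y => (dist_pi_le_iff (by positivity)).2 fun i => ?_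
  rw [Real.dist_eq, abs_le]
  constructor
  · linarith [dist_comm y x ▸ hstep y x i]
  · exact hstep x y i

end HJB

theorem discrete_HJB_unique_solution_general
    (N : ℕ) (a b : ℝ) (hab : a ≤ b)
    (𝔄 : ℝ → Matrix (Fin N) (Fin N) ℝ) (𝔅 : ℝ → (Fin N → ℝ))
    (hAcont : ContinuousOn 𝔄 (Set.Icc a b)) (hbcont : ContinuousOn 𝔅 (Set.Icc a b))
    (hKo : ∀ u ∈ Set.Icc a b, KoMat (𝔄 u)) :
    ∃! x : Fin N → ℝ,
      ∀ i : Fin N,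
        IsLeast ((fun u => (𝔄 u *ᵥ x - 𝔅 u) i) '' Set.Icc a b) 0 := by
  have hmin := isLeast_hjbMin 𝔄 𝔅 _ isCompact_Icc (Set.nonempty_Icc.2 hab) hAcont hbcont
  obtain ⟨l, hl, hdiag⟩ := exists_pos_forall_mul_diag_le_one isCompact_Icc hAcont
  obtain ⟨δ, hδ, hgap⟩ := exists_pos_forall_le_rowGap isCompact_Icc hAcont
    fun u hu => (hKo u hu).rowGap_pos
  have hT : ContractingWith (1 - l * δ).toNNReal fun x => x - l • hjbMin 𝔄 𝔅 (Set.Icc a b) x :=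
    ⟨Real.toNNReal_lt_one.2 (sub_lt_self 1 (mul_pos hl hδ)),
      lipschitzWith_sub_smul_hjbMin hmin hl.le hdiag fun u hu i =>
        (sub_le_sub_left (mul_le_mul_of_nonneg_left (hgap u hu i) hl.le) 1).trans
          (Real.le_coe_toNNReal _)⟩
  refine (existsUnique_congr fun x => ?_).1 (existsUnique_eq_zero_of_contractingWith hl.ne' hT)
  simp only [funext_iff, Pi.zero_apply]
  exact forall_congr' fun i => ⟨fun h => h ▸ hmin x i, (hmin x i).unique⟩

/-- The discrete HJB equation `min_{u ∈ U} {A_u x - b_u} = 0` has exactly one solution. -/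
theorem discrete_HJB_unique_solution
    (N : ℕ) (hN : 0 < N) (a b : ℝ) (hab : a ≤ b)
    (𝔄 : ℝ → Matrix (Fin N) (Fin N) ℝ) (𝔅 : ℝ → (Fin N → ℝ))
    (hAcont : ContinuousOn 𝔄 (Set.Icc a b)) (hbcont : ContinuousOn 𝔅 (Set.Icc a b))
    (hKo : ∀ u ∈ Set.Icc a b, KoMat (𝔄 u)) :
    ∃! x : Fin N → ℝ,
      ∀ i : Fin N,
        IsLeast ((fun u => (𝔄 u *ᵥ x - 𝔅 u) i) '' Set.Icc a b) 0 :=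
  discrete_HJB_unique_solution_general N a b hab 𝔄 𝔅 hAcont hbcont hKo
end

section
/- The discrete HJB obstacle problem has exactly one solution: there exists a unique vector z ∈ ℝ^N such that min{ max_{u∈U}{A_u z − b_u}, Ãz − b̃ } = 0, i.e. for every component i one has min{ max_{u∈U}(A_u z − b_u)_i , (Ãz − b̃)_i } = 0. -/
open Matrix Filter

/-!
For `τ > 0` the equation `F z = 0`, with `F z = min {max_u (A_u z - b_u), Ã z - b̃}`, says that `z`
is a fixed point of `z ↦ z - τ F z`. Coordinatewise this map is a maximum of an infimum of the
affine maps `z ↦ z_i - τ (A z - b)_i`, one for each matrix `A` of the compact family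
`{A_u} ∪ {Ã}`. If `τ a_ii ≤ 1` and every row has dominance margin `a_ii - ∑_{j ≠ i} |a_ij| ≥ γ`,
each of these maps is `(1 - τγ)`-Lipschitz for the maximum norm, and Lipschitz constants survive
infima and maxima. Compactness provides uniform `τ, γ > 0`, so the map is a contraction and
Banach's fixed point theorem gives existence and uniqueness.
-/

open scoped NNReal

section Lipschitz

variable {α ι : Type*} [PseudoMetricSpace α] {K : ℝ≥0}

theorem lipschitzWith_pi [Fintype ι] {f : α → ι → ℝ} (hf : ∀ i, LipschitzWith K fun x => f x i) :
    LipschitzWith K f :=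
  LipschitzWith.of_dist_le_mul fun x y =>
    (dist_pi_le_iff (by positivity)).2 fun i => (hf i).dist_le_mul x y

theorem LipschitzWith.csInf_image {U : Set ι} (hU : U.Nonempty) {h : α → ι → ℝ}
    (hh : ∀ u ∈ U, LipschitzWith K fun x => h x u) (hbdd : ∀ x, BddBelow (h x '' U)) :
    LipschitzWith K fun x => sInf (h x '' U) :=
  LipschitzWith.of_le_add_mul K fun x y => by
    rw [← sub_le_iff_le_add]
    refine le_csInf (hU.image _) ?_
    rintro _ ⟨u, hu, rfl⟩
    rw [sub_le_iff_le_add]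
    exact (csInf_le (hbdd x) ⟨u, hu, rfl⟩).trans ((hh u hu).le_add_mul x y)

end Lipschitz

section Relaxation

variable {ι : Type*} {U : Set ι} {g : ι → ℝ} {τ : ℝ}

theorem antitone_sub_mul (hτ : 0 ≤ τ) (x : ℝ) : Antitone fun t : ℝ => x - τ * t :=
  fun _ _ hst => sub_le_sub_left (mul_le_mul_of_nonneg_left hst hτ) x

theorem bddBelow_sub_mul_image (hg : BddAbove (g '' U)) (hτ : 0 ≤ τ) (x : ℝ) :
    BddBelow ((fun u => x - τ * g u) '' U) := by
  simpa only [Set.image_image] using (antitone_sub_mul hτ x).map_bddAbove hg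

theorem sub_mul_csSup_image (hU : U.Nonempty) (hg : BddAbove (g '' U)) (hτ : 0 ≤ τ) (x : ℝ) :
    x - τ * sSup (g '' U) = sInf ((fun u => x - τ * g u) '' U) := by
  rw [← Set.image_image (fun t : ℝ => x - τ * t)]
  exact (antitone_sub_mul hτ x).map_csSup_of_continuousAt
    (continuous_const.sub (continuous_const.mul continuous_id)).continuousAt (hU.image g) hg

theorem sub_mul_min (hτ : 0 ≤ τ) (x s o : ℝ) :
    x - τ * min s o = max (x - τ * s) (x - τ * o) := by
  rw [mul_min_of_nonneg _ _ hτ, max_sub_sub_left]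

theorem LipschitzWith.sub_mul_min_csSup_image {α : Type*} [PseudoMetricSpace α] {K : ℝ≥0}
    (hU : U.Nonempty) (hτ : 0 ≤ τ) {p o : α → ℝ} {h : α → ι → ℝ}
    (hh : ∀ u ∈ U, LipschitzWith K fun x => p x - τ * h x u)
    (ho : LipschitzWith K fun x => p x - τ * o x) (hbdd : ∀ x, BddAbove (h x '' U)) :
    LipschitzWith K fun x => p x - τ * min (sSup (h x '' U)) (o x) := by
  have hmax : ∀ x, p x - τ * min (sSup (h x '' U)) (o x)
      = max (sInf ((fun u => p x - τ * h x u) '' U)) (p x - τ * o x) := fun x => by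
    rw [sub_mul_min hτ, sub_mul_csSup_image hU (hbdd x) hτ]
  simpa only [hmax, max_self] using
    (LipschitzWith.csInf_image hU hh fun x => bddBelow_sub_mul_image (hbdd x) hτ (p x)).max ho

end Relaxation

section DiagonalDominance

variable {ι : Type*} [Fintype ι] [DecidableEq ι]

def dominanceMargin (A : Matrix ι ι ℝ) (i : ι) : ℝ :=
  A i i - ∑ j ∈ Finset.univ.erase i, |A i j|

theorem KoMat.dominanceMargin_pos {N : ℕ} {A : Matrix (Fin N) (Fin N) ℝ} (hA : KoMat A)
    (i : Fin N) : 0 < dominanceMargin A i :=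
  sub_pos.2 (hA.2 i)

theorem abs_sub_mul_dotProduct_le {c w : ι → ℝ} {i : ι} {τ γ : ℝ} (hτ : 0 ≤ τ)
    (hτc : τ * c i ≤ 1) (hγ : γ ≤ c i - ∑ j ∈ Finset.univ.erase i, |c j|) :
    |w i - τ * (c ⬝ᵥ w)| ≤ (1 - τ * γ) * ‖w‖ := by
  have hw : ∀ j, |w j| ≤ ‖w‖ := fun j => by simpa using norm_le_pi_norm w j
  have hsplit : c ⬝ᵥ w = c i * w i + ∑ j ∈ Finset.univ.erase i, c j * w j :=
    (Finset.add_sum_erase _ _ (Finset.mem_univ i)).symm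
  have hoff : |∑ j ∈ Finset.univ.erase i, c j * w j|
      ≤ (∑ j ∈ Finset.univ.erase i, |c j|) * ‖w‖ :=
    calc |∑ j ∈ Finset.univ.erase i, c j * w j|
        ≤ ∑ j ∈ Finset.univ.erase i, |c j| * |w j| := by
          simpa only [abs_mul] using Finset.abs_sum_le_sum_abs (fun j => c j * w j) _
      _ ≤ ∑ j ∈ Finset.univ.erase i, |c j| * ‖w‖ := by gcongr; exact hw _
      _ = (∑ j ∈ Finset.univ.erase i, |c j|) * ‖w‖ := (Finset.sum_mul ..).symm
  calc |w i - τ * (c ⬝ᵥ w)|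
      = |(1 - τ * c i) * w i - τ * ∑ j ∈ Finset.univ.erase i, c j * w j| := by
        rw [hsplit]; ring_nf
    _ ≤ (1 - τ * c i) * |w i| + τ * |∑ j ∈ Finset.univ.erase i, c j * w j| := by
        refine (abs_sub _ _).trans_eq ?_
        rw [abs_mul, abs_mul, abs_of_nonneg (sub_nonneg.2 hτc), abs_of_nonneg hτ]
    _ ≤ (1 - τ * c i) * ‖w‖ + τ * ((∑ j ∈ Finset.univ.erase i, |c j|) * ‖w‖) := by
        gcongr
        exact hw i
    _ = (1 - τ * (c i - ∑ j ∈ Finset.univ.erase i, |c j|)) * ‖w‖ := by ring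
    _ ≤ (1 - τ * γ) * ‖w‖ := by gcongr

theorem lipschitzWith_sub_mul_mulVec_sub_apply {A : Matrix ι ι ℝ} {i : ι} {τ γ : ℝ}
    (hτ : 0 ≤ τ) (hτA : τ * A i i ≤ 1) (hγ : γ ≤ dominanceMargin A i) (b : ι → ℝ) :
    LipschitzWith (1 - τ * γ).toNNReal fun x => x i - τ * (A *ᵥ x - b) i :=
  LipschitzWith.of_dist_le' fun x y => by
    rw [dist_eq_norm, dist_eq_norm, Real.norm_eq_abs]
    convert abs_sub_mul_dotProduct_le (w := x - y) hτ hτA hγ using 2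
    simp only [Pi.sub_apply, mulVec, dotProduct_sub]
    ring

end DiagonalDominance

theorem IsCompact.exists_uniform_relaxation_params {N : ℕ}
    {S : Set (Matrix (Fin N) (Fin N) ℝ)} (hS : IsCompact S)
    (hdom : ∀ A ∈ S, ∀ i, 0 < dominanceMargin A i) :
    ∃ τ > 0, ∃ γ > 0, ∀ A ∈ S, ∀ i, τ * A i i ≤ 1 ∧ γ ≤ dominanceMargin A i := by
  have hSI : IsCompact (S ×ˢ Set.univ) := hS.prod (isCompact_univ (X := Fin N))
  obtain ⟨γ, hγ, hγle⟩ := hSI.exists_forall_le' (f := fun p => dominanceMargin p.1 p.2)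
    (continuous_prod_of_discrete_right.2 fun i => by
      dsimp only [dominanceMargin]; fun_prop).continuousOn
    (a := 0) fun p hp => hdom p.1 hp.1 p.2
  obtain ⟨M, hM⟩ := hSI.bddAbove_image (f := fun p => p.1 p.2 p.2)
    (continuous_prod_of_discrete_right.2 fun i => by dsimp only; fun_prop).continuousOn
  refine ⟨(max M 1)⁻¹, by positivity, γ, hγ, fun A hA i => ⟨?_, hγle (A, i) ⟨hA, trivial⟩⟩⟩
  rw [inv_mul_le_iff₀ (by positivity), mul_one]
  exact (hM ⟨(A, i), ⟨hA, trivial⟩, rfl⟩).trans (le_max_left _ _)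

theorem existsUnique_eq_zero_of_contractingWith_s1 {E : Type*} [NormedAddCommGroup E]
    [NormedSpace ℝ E] [CompleteSpace E] {F : E → E} {τ : ℝ} {K : ℝ≥0} (hτ : τ ≠ 0)
    (hF : ContractingWith K fun z => z - τ • F z) : ∃! z, F z = 0 := by
  have hfix : ∀ z, Function.IsFixedPt (fun z => z - τ • F z) z ↔ F z = 0 := fun z => by
    simp [Function.IsFixedPt, hτ]
  exact ⟨hF.fixedPoint _, (hfix _).1 hF.fixedPoint_isFixedPt,
    fun z hz => hF.fixedPoint_unique ((hfix z).2 hz)⟩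

theorem discrete_HJB_obstacle_unique_solution_general
    (N : ℕ) (a b : ℝ) (hab : a ≤ b)
    (𝔄 : ℝ → Matrix (Fin N) (Fin N) ℝ) (𝔅 : ℝ → (Fin N → ℝ))
    (hAcont : ContinuousOn 𝔄 (Set.Icc a b)) (hbcont : ContinuousOn 𝔅 (Set.Icc a b))
    (hKo : ∀ u ∈ Set.Icc a b, KoMat (𝔄 u))
    (At : Matrix (Fin N) (Fin N) ℝ) (bt : Fin N → ℝ) (hAt : KoMat At) :
    ∃! z : Fin N → ℝ,
      ∀ i : Fin N,
        min (sSup ((fun u => (𝔄 u *ᵥ z - 𝔅 u) i) '' Set.Icc a b))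
          ((At *ᵥ z - bt) i) = 0 := by
  set U := Set.Icc a b
  obtain ⟨τ, hτ, γ, hγ, hparams⟩ :=
    ((isCompact_Icc.image_of_continuousOn hAcont).insert At).exists_uniform_relaxation_params
      (by rintro A (rfl | ⟨u, hu, rfl⟩)
          exacts [hAt.dominanceMargin_pos, (hKo u hu).dominanceMargin_pos])
  have hrow : ∀ A ∈ insert At (𝔄 '' U), ∀ (c : Fin N → ℝ) i,
      LipschitzWith (1 - τ * γ).toNNReal fun z => z i - τ * (A *ᵥ z - c) i :=
    fun A hA c i => lipschitzWith_sub_mul_mulVec_sub_apply hτ.le (hparams A hA i).1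
      (hparams A hA i).2 c
  have hbdd : ∀ z i, BddAbove ((fun u => (𝔄 u *ᵥ z - 𝔅 u) i) '' U) := fun z i =>
    isCompact_Icc.bddAbove_image (by fun_prop)
  set F : (Fin N → ℝ) → Fin N → ℝ := fun z i =>
    min (sSup ((fun u => (𝔄 u *ᵥ z - 𝔅 u) i) '' U)) ((At *ᵥ z - bt) i)
  have hcontr : ContractingWith (1 - τ * γ).toNNReal fun z => z - τ • F z :=
    ⟨Real.toNNReal_lt_one.2 (sub_lt_self _ (mul_pos hτ hγ)), lipschitzWith_pi fun i =>
      LipschitzWith.sub_mul_min_csSup_image (Set.nonempty_Icc.2 hab) hτ.le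
        (fun u hu => hrow _ (Set.mem_insert_of_mem _ (Set.mem_image_of_mem _ hu)) _ i)
        (hrow At (Set.mem_insert _ _) bt i) fun z => hbdd z i⟩
  simpa only [funext_iff, Pi.zero_apply] using existsUnique_eq_zero_of_contractingWith_s1 hτ.ne' hcontr

/-- The discrete HJB obstacle problem
`min { max_{u ∈ U} {A_u z - b_u}, Ã z - b̃ } = 0` has exactly one solution.
The inner maximum over the compact set `U` is expressed via `sSup` of the image
(the supremum is attained by compactness and continuity). -/
theorem discrete_HJB_obstacle_unique_solution
    (N : ℕ) (hN : 0 < N) (a b : ℝ) (hab : a ≤ b)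
    (𝔄 : ℝ → Matrix (Fin N) (Fin N) ℝ) (𝔅 : ℝ → (Fin N → ℝ))
    (hAcont : ContinuousOn 𝔄 (Set.Icc a b)) (hbcont : ContinuousOn 𝔅 (Set.Icc a b))
    (hKo : ∀ u ∈ Set.Icc a b, KoMat (𝔄 u))
    (At : Matrix (Fin N) (Fin N) ℝ) (bt : Fin N → ℝ) (hAt : KoMat At) :
    ∃! z : Fin N → ℝ,
      ∀ i : Fin N,
        min (sSup ((fun u => (𝔄 u *ᵥ z - 𝔅 u) i) '' Set.Icc a b))
          ((At *ᵥ z - bt) i) = 0 :=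
  discrete_HJB_obstacle_unique_solution_general N a b hab 𝔄 𝔅 hAcont hbcont hKo At bt hAt
end

section
/- For any fixed u_0 ∈ U, ρ > 0 and penalty term Π, the penalised HJB equation (A_{u_0}x − b_{u_0}) − ρ·max_{u∈U} Π(b_u − A_u x) = 0 has at most one solution x ∈ ℝ^N: if x_1 and x_2 both solve it, then x_1 = x_2. -/
/-!
If `x₁ - x₂` has a positive maximum `δ` at index `i`, the sign pattern and strict diagonal
dominance of each `A_u` give `(A_u (x₁ - x₂))_i ≥ (A_u)_{ii} δ + ∑_{s ≠ i} (A_u)_{is} δ > 0`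
for every `u`. Hence `(b_u - A_u x₁)_i < (b_u - A_u x₂)_i` for all `u`, so the monotone penalty
makes the maximum in row `i` of the equation for `x₁` at most the one for `x₂`, while the linear
part for `x₁` is strictly larger: the two equations cannot both hold in row `i`.
-/

open Matrix Filter

/-- A penalty term `Π(y) = (π₁(y₁),…,π_N(y_N))`: each `π i` is continuous,
non-decreasing, identically zero on `(-∞,0]` and strictly positive on `(0,∞)`. -/
structure PenaltyTerm (N : ℕ) where
  π : Fin N → ℝ → ℝ
  cont : ∀ i, Continuous (π i)
  mono : ∀ i, Monotone (π i)
  eq_zero : ∀ i y, y ≤ 0 → π i y = 0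
  pos : ∀ i y, 0 < y → 0 < π i y

/-- The penalised HJB equation
`(A_{u₀} x - b_{u₀}) - ρ · max_{u∈U} Π(b_u - A_u x) = 0` (componentwise);
the maximum over the compact set `U` is expressed via `sSup` of the image. -/
def PenHJBEq {N : ℕ} (𝔄 : ℝ → Matrix (Fin N) (Fin N) ℝ) (𝔅 : ℝ → (Fin N → ℝ))
    (U : Set ℝ) (P : PenaltyTerm N) (u₀ ρ : ℝ) (x : Fin N → ℝ) : Prop :=
  ∀ i : Fin N,
    (𝔄 u₀ *ᵥ x - 𝔅 u₀) i -
      ρ * sSup ((fun u => P.π i ((𝔅 u - 𝔄 u *ᵥ x) i)) '' U) = 0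

lemma KoMat.mulVec_pos_of_le {N : ℕ} {A : Matrix (Fin N) (Fin N) ℝ} (hA : KoMat A)
    {z : Fin N → ℝ} {i : Fin N} (hmax : ∀ s, z s ≤ z i) (hpos : 0 < z i) :
    0 < (A *ᵥ z) i := by
  have hoff : ∑ s ∈ Finset.univ.erase i, A i s * z i ≤ ∑ s ∈ Finset.univ.erase i, A i s * z s :=
    Finset.sum_le_sum fun s hs =>
      mul_le_mul_of_nonpos_left (hmax s) (hA.1 i s (Finset.ne_of_mem_erase hs).symm)
  have habs : -∑ s ∈ Finset.univ.erase i, |A i s| ≤ ∑ s ∈ Finset.univ.erase i, A i s := by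
    rw [← Finset.sum_neg_distrib]
    exact Finset.sum_le_sum fun s _ => neg_abs_le _
  have hdiag : 0 < A i i + ∑ s ∈ Finset.univ.erase i, A i s := by linarith [hA.2 i]
  calc 0 < (A i i + ∑ s ∈ Finset.univ.erase i, A i s) * z i := mul_pos hdiag hpos
    _ = A i i * z i + ∑ s ∈ Finset.univ.erase i, A i s * z i := by rw [add_mul, Finset.sum_mul]
    _ ≤ A i i * z i + ∑ s ∈ Finset.univ.erase i, A i s * z s := by linarith
    _ = (A *ᵥ z) i := by
      rw [Matrix.mulVec, dotProduct, ← Finset.add_sum_erase _ _ (Finset.mem_univ i)]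

lemma csSup_image_le_csSup_image {α β : Type*} [ConditionallyCompleteLattice β] {f g : α → β}
    {s : Set α} (hs : s.Nonempty) (hg : BddAbove (g '' s)) (h : ∀ x ∈ s, f x ≤ g x) :
    sSup (f '' s) ≤ sSup (g '' s) :=
  csSup_le (hs.image f) <| Set.forall_mem_image.2 fun x hx =>
    (h x hx).trans (le_csSup hg (Set.mem_image_of_mem g hx))

lemma PenaltyTerm.bddAbove_image_residual {N : ℕ} (P : PenaltyTerm N)
    {𝔄 : ℝ → Matrix (Fin N) (Fin N) ℝ} {𝔅 : ℝ → (Fin N → ℝ)} {U : Set ℝ} (hU : IsCompact U)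
    (hAcont : ContinuousOn 𝔄 U) (hbcont : ContinuousOn 𝔅 U) (x : Fin N → ℝ) (i : Fin N) :
    BddAbove ((fun u => P.π i ((𝔅 u - 𝔄 u *ᵥ x) i)) '' U) := by
  have hres : ContinuousOn (fun u => 𝔅 u - 𝔄 u *ᵥ x) U :=
    hbcont.sub ((continuous_id.matrix_mulVec continuous_const).comp_continuousOn hAcont)
  exact (hU.image_of_continuousOn
    ((P.cont i).comp_continuousOn ((continuous_apply i).comp_continuousOn hres))).bddAbove

lemma PenHJBEq.le {N : ℕ} {𝔄 : ℝ → Matrix (Fin N) (Fin N) ℝ}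
    {𝔅 : ℝ → (Fin N → ℝ)} {U : Set ℝ} (hU : IsCompact U)
    (hAcont : ContinuousOn 𝔄 U) (hbcont : ContinuousOn 𝔅 U) (hKo : ∀ u ∈ U, KoMat (𝔄 u))
    {P : PenaltyTerm N} {u₀ ρ : ℝ} (hu₀ : u₀ ∈ U) (hρ : 0 < ρ) {x₁ x₂ : Fin N → ℝ}
    (h₁ : PenHJBEq 𝔄 𝔅 U P u₀ ρ x₁) (h₂ : PenHJBEq 𝔄 𝔅 U P u₀ ρ x₂) : x₁ ≤ x₂ := by
  refine fun j => le_of_not_gt fun hj => ?_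
  have : Nonempty (Fin N) := ⟨j⟩
  obtain ⟨i, hmax⟩ := Finite.exists_max (x₁ - x₂)
  have hpos : 0 < (x₁ - x₂) i := (sub_pos.2 hj).trans_le (hmax j)
  have hlt : ∀ u ∈ U, (𝔄 u *ᵥ x₂) i < (𝔄 u *ᵥ x₁) i := fun u hu => by
    simpa [Matrix.mulVec_sub] using (hKo u hu).mulVec_pos_of_le hmax hpos
  have hsup : sSup ((fun u => P.π i ((𝔅 u - 𝔄 u *ᵥ x₁) i)) '' U) ≤
      sSup ((fun u => P.π i ((𝔅 u - 𝔄 u *ᵥ x₂) i)) '' U) :=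
    csSup_image_le_csSup_image ⟨u₀, hu₀⟩ (P.bddAbove_image_residual hU hAcont hbcont x₂ i)
      fun u hu => P.mono i (by simpa only [Pi.sub_apply, sub_le_sub_iff_left] using (hlt u hu).le)
  linarith [h₁ i, h₂ i, hlt u₀ hu₀, mul_le_mul_of_nonneg_left hsup hρ.le,
    Pi.sub_apply (𝔄 u₀ *ᵥ x₁) (𝔅 u₀) i, Pi.sub_apply (𝔄 u₀ *ᵥ x₂) (𝔅 u₀) i]

theorem penalised_HJB_unique_general
    (N : ℕ) (a b : ℝ)
    (𝔄 : ℝ → Matrix (Fin N) (Fin N) ℝ) (𝔅 : ℝ → (Fin N → ℝ))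
    (hAcont : ContinuousOn 𝔄 (Set.Icc a b)) (hbcont : ContinuousOn 𝔅 (Set.Icc a b))
    (hKo : ∀ u ∈ Set.Icc a b, KoMat (𝔄 u))
    (u₀ : ℝ) (hu₀ : u₀ ∈ Set.Icc a b) (ρ : ℝ) (hρ : 0 < ρ)
    (P : PenaltyTerm N) (x₁ x₂ : Fin N → ℝ)
    (h₁ : PenHJBEq 𝔄 𝔅 (Set.Icc a b) P u₀ ρ x₁)
    (h₂ : PenHJBEq 𝔄 𝔅 (Set.Icc a b) P u₀ ρ x₂) :
    x₁ = x₂ :=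
  le_antisymm (h₁.le isCompact_Icc hAcont hbcont hKo hu₀ hρ h₂)
    (h₂.le isCompact_Icc hAcont hbcont hKo hu₀ hρ h₁)

/-- The penalised HJB equation has at most one solution. -/
theorem penalised_HJB_unique
    (N : ℕ) (hN : 0 < N) (a b : ℝ) (hab : a ≤ b)
    (𝔄 : ℝ → Matrix (Fin N) (Fin N) ℝ) (𝔅 : ℝ → (Fin N → ℝ))
    (hAcont : ContinuousOn 𝔄 (Set.Icc a b)) (hbcont : ContinuousOn 𝔅 (Set.Icc a b))
    (hKo : ∀ u ∈ Set.Icc a b, KoMat (𝔄 u))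
    (u₀ : ℝ) (hu₀ : u₀ ∈ Set.Icc a b) (ρ : ℝ) (hρ : 0 < ρ)
    (P : PenaltyTerm N) (x₁ x₂ : Fin N → ℝ)
    (h₁ : PenHJBEq 𝔄 𝔅 (Set.Icc a b) P u₀ ρ x₁)
    (h₂ : PenHJBEq 𝔄 𝔅 (Set.Icc a b) P u₀ ρ x₂) :
    x₁ = x₂ :=
  penalised_HJB_unique_general N a b 𝔄 𝔅 hAcont hbcont hKo u₀ hu₀ ρ hρ P x₁ x₂ h₁ h₂
end

section
/- There exists a constant C > 0, independent of ρ and of the penalty term Π, such that for every ρ > 0, every penalty term Π, and every solution x_ρ of the penalised HJB equation, one has ‖ min_{u∈U} [ max{A_u x_ρ − b_u , 0} − Π(b_u − A_u x_ρ) ] ‖∞ ≤ C/ρ, where the i-th component of the vector inside the norm is min_{u∈U} ( max{(A_u x_ρ − b_u)_i , 0} − π_i((b_u − A_u x_ρ)_i) ). -/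
open Matrix Filter

/-!
Write `S i` for the maximal penalty in row `i`, so that the equation reads
`A_{u₀} x - b_{u₀} = ρ S`. In every row some control satisfies `(A_u x - b_u) i ≤ 0` (otherwise
all penalties vanish, `S i = 0`, and `u₀` itself is such a control), while `u₀` satisfies
`(A_{u₀} x - b_{u₀}) i = ρ S i ≥ 0`. Evaluated at an extremal entry of `x`, these sign conditions
and the discrete maximum principle for the Z-matrices `A_u`, whose row sums are bounded below by
some `δ > 0` uniformly on the compact set of controls, give `‖x‖ ≤ B / δ` with `B` a bound
for `b_u`. Hence `ρ S = A_{u₀} x - b_{u₀}` is bounded independently of `ρ` and `Π`, and every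
entry of the minimum in the statement lies in `[-S i, 0]`.
-/

section ZMatrix

variable {ι : Type*} [Fintype ι]

theorem sum_row_mul_le_mulVec {A : Matrix ι ι ℝ} {x : ι → ℝ} {i : ι}
    (hA : ∀ j, i ≠ j → A i j ≤ 0) (hx : ∀ j, x j ≤ x i) :
    (∑ j, A i j) * x i ≤ (A *ᵥ x) i := by
  rw [mulVec, dotProduct, Finset.sum_mul]
  refine Finset.sum_le_sum fun j _ => ?_
  rcases eq_or_ne i j with rfl | hij
  · exact le_rfl
  · exact mul_le_mul_of_nonpos_left (hx j) (hA j hij)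

theorem diag_sub_sum_abs_le_sum_row [DecidableEq ι] (A : Matrix ι ι ℝ) (i : ι) :
    A i i - ∑ j ∈ Finset.univ.erase i, |A i j| ≤ ∑ j, A i j := by
  rw [← Finset.sum_erase_add _ _ (Finset.mem_univ i), sub_eq_neg_add, add_le_add_iff_right,
    ← Finset.sum_neg_distrib]
  exact Finset.sum_le_sum fun j _ => neg_abs_le _

variable {X : Type*} {U : Set X} {A : X → Matrix ι ι ℝ} {b : X → ι → ℝ} {x : ι → ℝ} {δ B : ℝ}

theorem le_div_of_forall_exists_mulVec_sub_nonpos (hδ : 0 < δ) (hB : 0 ≤ B)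
    (hoff : ∀ u ∈ U, ∀ i j, i ≠ j → A u i j ≤ 0) (hrow : ∀ u ∈ U, ∀ i, δ ≤ ∑ j, A u i j)
    (hb : ∀ u ∈ U, ‖b u‖ ≤ B) (hsub : ∀ i, ∃ u ∈ U, (A u *ᵥ x - b u) i ≤ 0) (i : ι) :
    x i ≤ B / δ := by
  obtain ⟨k, -, hk⟩ := Finset.exists_max_image Finset.univ x ⟨i, Finset.mem_univ i⟩
  have hik : x i ≤ x k := hk i (Finset.mem_univ i)
  rw [le_div_iff₀ hδ]
  rcases le_or_gt (x k) 0 with hk_nonpos | hk_pos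
  · nlinarith
  obtain ⟨u, hu, hAx⟩ := hsub k
  calc x i * δ ≤ (∑ j, A u k j) * x k := by nlinarith [hrow u hu k]
    _ ≤ (A u *ᵥ x) k := sum_row_mul_le_mulVec (hoff u hu k) fun j => hk j (Finset.mem_univ j)
    _ ≤ b u k := by simpa only [Pi.sub_apply, sub_nonpos] using hAx
    _ ≤ B := (Real.le_norm_self _).trans ((norm_le_pi_norm (b u) k).trans (hb u hu))

theorem norm_le_div_of_forall_exists_mulVec_sub (hδ : 0 < δ) (hB : 0 ≤ B)
    (hoff : ∀ u ∈ U, ∀ i j, i ≠ j → A u i j ≤ 0) (hrow : ∀ u ∈ U, ∀ i, δ ≤ ∑ j, A u i j)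
    (hb : ∀ u ∈ U, ‖b u‖ ≤ B) (hsub : ∀ i, ∃ u ∈ U, (A u *ᵥ x - b u) i ≤ 0)
    (hsuper : ∀ i, ∃ u ∈ U, 0 ≤ (A u *ᵥ x - b u) i) : ‖x‖ ≤ B / δ := by
  refine (pi_norm_le_iff_of_nonneg (by positivity)).2 fun i => abs_le.2 ⟨?_, ?_⟩
  · have hneg := le_div_of_forall_exists_mulVec_sub_nonpos (x := -x) (b := fun u => -b u) hδ hB
      hoff hrow (fun u hu => (norm_neg (b u)).trans_le (hb u hu)) (fun j => ?_) i
    · exact neg_le.1 hneg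
    obtain ⟨u, hu, h⟩ := hsuper j
    exact ⟨u, hu, by simpa only [mulVec_neg, Pi.sub_apply, Pi.neg_apply, neg_sub_neg, sub_nonpos,
      sub_nonneg] using h⟩
  · exact le_div_of_forall_exists_mulVec_sub_nonpos hδ hB hoff hrow hb hsub i

end ZMatrix

theorem exists_pos_le_sum_row_of_koMat {N : ℕ} {X : Type*} [TopologicalSpace X] {U : Set X}
    (hU : IsCompact U) {A : X → Matrix (Fin N) (Fin N) ℝ} (hA : ContinuousOn A U)
    (hKo : ∀ u ∈ U, KoMat (A u)) : ∃ δ > 0, ∀ u ∈ U, ∀ i, δ ≤ ∑ j, A u i j := by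
  have hrow_pos : ∀ i, ∃ δ > 0, ∀ u ∈ U, δ ≤ ∑ j, A u i j := fun i =>
    hU.exists_forall_le' (f := fun u => ∑ j, A u i j) (by fun_prop) fun u hu =>
      (sub_pos.2 ((hKo u hu).2 i)).trans_le (diag_sub_sum_abs_le_sum_row (A u) i)
  choose δ hδ hδle using hrow_pos
  obtain ⟨δ₀, hδ₀, hδ₀le⟩ := (Set.finite_univ (α := Fin N)).isCompact.exists_forall_le'
    (continuous_of_discreteTopology (f := δ)).continuousOn fun i _ => hδ i
  exact ⟨δ₀, hδ₀, fun u hu i => (hδ₀le i (Set.mem_univ i)).trans (hδle i u hu)⟩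

section PenaltyScalar

variable {X : Type*} {U : Set X} {t : X → ℝ} {π : ℝ → ℝ} {u₀ : X} {ρ : ℝ}

theorem exists_nonpos_of_eq_mul_sSup_penalty (hu₀ : u₀ ∈ U) (hπ0 : ∀ y ≤ 0, π y = 0)
    (heq : t u₀ = ρ * sSup ((fun u => π (-t u)) '' U)) : ∃ u ∈ U, t u ≤ 0 := by
  by_contra! hpos
  have hS : (fun u => π (-t u)) '' U = {0} := by
    rw [Set.image_congr fun u hu => hπ0 _ (neg_nonpos.2 (hpos u hu).le)]
    exact Set.Nonempty.image_const ⟨u₀, hu₀⟩ 0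
  rw [hS, csSup_singleton, mul_zero] at heq
  linarith [hpos u₀ hu₀]

theorem abs_sInf_max_sub_penalty_le_sSup [TopologicalSpace X] (hU : IsCompact U)
    (ht : ContinuousOn t U) (hπ : Continuous π) (hπ_nonneg : ∀ y, 0 ≤ π y)
    (hne : ∃ u ∈ U, t u ≤ 0) :
    |sInf ((fun u => max (t u) 0 - π (-t u)) '' U)| ≤ sSup ((fun u => π (-t u)) '' U) := by
  obtain ⟨v, hv, hv_nonpos⟩ := hne
  have hpen : ContinuousOn (fun u => π (-t u)) U := hπ.comp_continuousOn ht.neg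
  have hle_sSup : ∀ u ∈ U, π (-t u) ≤ sSup ((fun u => π (-t u)) '' U) := fun u hu =>
    le_csSup (hU.image_of_continuousOn hpen).bddAbove ⟨u, hu, rfl⟩
  obtain ⟨w, hw, hw_eq, hw_min⟩ :=
    hU.exists_sInf_image_eq_and_le (f := fun u => max (t u) 0 - π (-t u)) ⟨v, hv⟩ (by fun_prop)
  have hwv := hw_min v hv
  rw [max_eq_right hv_nonpos] at hwv
  rw [hw_eq, abs_le]
  constructor
  · linarith [le_max_right (t w) 0, hle_sSup w hw]
  · linarith [hπ_nonneg (-t v), hle_sSup v hv]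

end PenaltyScalar

theorem PenaltyTerm.nonneg {N : ℕ} (P : PenaltyTerm N) (i : Fin N) (y : ℝ) : 0 ≤ P.π i y := by
  rcases le_or_gt y 0 with hy | hy
  · exact (P.eq_zero i y hy).ge
  · exact (P.pos i y hy).le

theorem PenHJBEq.residual_eq_mul_sSup {N : ℕ} {𝔄 : ℝ → Matrix (Fin N) (Fin N) ℝ}
    {𝔅 : ℝ → Fin N → ℝ} {U : Set ℝ} {P : PenaltyTerm N} {u₀ ρ : ℝ} {x : Fin N → ℝ}
    (hx : PenHJBEq 𝔄 𝔅 U P u₀ ρ x) (i : Fin N) :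
    (𝔄 u₀ *ᵥ x - 𝔅 u₀) i = ρ * sSup ((fun u => P.π i (-(𝔄 u *ᵥ x - 𝔅 u) i)) '' U) := by
  have h := hx i
  simp only [Pi.sub_apply, neg_sub] at h ⊢
  linarith

theorem penalised_HJB_residual_estimate_general
    (N : ℕ) (a b : ℝ)
    (𝔄 : ℝ → Matrix (Fin N) (Fin N) ℝ) (𝔅 : ℝ → (Fin N → ℝ))
    (hAcont : ContinuousOn 𝔄 (Set.Icc a b)) (hbcont : ContinuousOn 𝔅 (Set.Icc a b))
    (hKo : ∀ u ∈ Set.Icc a b, KoMat (𝔄 u))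
    (u₀ : ℝ) (hu₀ : u₀ ∈ Set.Icc a b) :
    ∃ C > (0:ℝ), ∀ ρ > (0:ℝ), ∀ P : PenaltyTerm N, ∀ x : Fin N → ℝ,
      PenHJBEq 𝔄 𝔅 (Set.Icc a b) P u₀ ρ x →
      ‖(fun i : Fin N =>
          sInf ((fun u => max ((𝔄 u *ᵥ x - 𝔅 u) i) 0 -
            P.π i ((𝔅 u - 𝔄 u *ᵥ x) i)) '' Set.Icc a b))‖ ≤ C / ρ := by
  have hU : IsCompact (Set.Icc a b) := isCompact_Icc
  obtain ⟨δ, hδ, hrow⟩ := exists_pos_le_sum_row_of_koMat hU hAcont hKo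
  obtain ⟨B, hB⟩ := hU.exists_bound_of_continuousOn hbcont
  have hB_nonneg : 0 ≤ B := (norm_nonneg _).trans (hB u₀ hu₀)
  obtain ⟨C, hC⟩ := (isCompact_closedBall (0 : Fin N → ℝ) (B / δ)).exists_bound_of_continuousOn
    (f := fun x => 𝔄 u₀ *ᵥ x - 𝔅 u₀) (by fun_prop)
  refine ⟨max C 1, lt_max_of_lt_right one_pos, fun ρ hρ P x hx => ?_⟩
  have heq := hx.residual_eq_mul_sSup
  have hsub i := exists_nonpos_of_eq_mul_sSup_penalty (t := fun u => (𝔄 u *ᵥ x - 𝔅 u) i) hu₀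
    (P.eq_zero i) (heq i)
  have hsuper i : 0 ≤ (𝔄 u₀ *ᵥ x - 𝔅 u₀) i := heq i ▸ mul_nonneg hρ.le
    (Real.sSup_nonneg (by rintro _ ⟨u, -, rfl⟩; exact P.nonneg i _))
  have hx_bdd : ‖x‖ ≤ B / δ := norm_le_div_of_forall_exists_mulVec_sub hδ hB_nonneg
    (fun u hu => (hKo u hu).1) hrow hB hsub fun i => ⟨u₀, hu₀, hsuper i⟩
  refine (pi_norm_le_iff_of_nonneg (by positivity)).2 fun i => ?_
  have hres : (𝔄 u₀ *ᵥ x - 𝔅 u₀) i ≤ max C 1 :=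
    (Real.le_norm_self _).trans <| (norm_le_pi_norm _ i).trans <|
      (hC x (mem_closedBall_zero_iff.2 hx_bdd)).trans (le_max_left _ _)
  calc _ ≤ sSup ((fun u => P.π i (-(𝔄 u *ᵥ x - 𝔅 u) i)) '' Set.Icc a b) := by
        simpa only [Real.norm_eq_abs, Pi.sub_apply, neg_sub] using
          abs_sInf_max_sub_penalty_le_sSup hU (by fun_prop) (P.cont i) (P.nonneg i) (hsub i)
    _ = (𝔄 u₀ *ᵥ x - 𝔅 u₀) i / ρ := by rw [heq i, mul_div_cancel_left₀ _ hρ.ne']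
    _ ≤ max C 1 / ρ := by gcongr

/-- `‖ min_{u∈U} [ max{A_u x_ρ - b_u, 0} - Π(b_u - A_u x_ρ) ] ‖∞ ≤ C/ρ`
with `C > 0` independent of `ρ` and of the penalty term `Π`;
the minimum over `U` is expressed via `sInf` of the image (attained by compactness). -/
theorem penalised_HJB_residual_estimate
    (N : ℕ) (hN : 0 < N) (a b : ℝ) (hab : a ≤ b)
    (𝔄 : ℝ → Matrix (Fin N) (Fin N) ℝ) (𝔅 : ℝ → (Fin N → ℝ))
    (hAcont : ContinuousOn 𝔄 (Set.Icc a b)) (hbcont : ContinuousOn 𝔅 (Set.Icc a b))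
    (hKo : ∀ u ∈ Set.Icc a b, KoMat (𝔄 u))
    (u₀ : ℝ) (hu₀ : u₀ ∈ Set.Icc a b) :
    ∃ C > (0:ℝ), ∀ ρ > (0:ℝ), ∀ P : PenaltyTerm N, ∀ x : Fin N → ℝ,
      PenHJBEq 𝔄 𝔅 (Set.Icc a b) P u₀ ρ x →
      ‖(fun i : Fin N =>
          sInf ((fun u => max ((𝔄 u *ᵥ x - 𝔅 u) i) 0 -
            P.π i ((𝔅 u - 𝔄 u *ᵥ x) i)) '' Set.Icc a b))‖ ≤ C / ρ :=
  penalised_HJB_residual_estimate_general N a b 𝔄 𝔅 hAcont hbcont hKo u₀ hu₀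
end

section
/- Fix u_0 ∈ U and a penalty term Π, and suppose that for every ρ > 0 there is a solution x_ρ of the penalised HJB equation. Then there exists x* ∈ ℝ^N such that x_ρ → x* as ρ → ∞, and x* solves the discrete HJB equation min_{u∈U}{A_u x* − b_u} = 0. -/
/-!
Every `A_u` is a strictly diagonally dominant Z-matrix, so at an index where `v - w` is maximal
and positive, `A_u (v - w)` is positive for all `u`; hence `v ↦ A_{u₀} v - ρ max_u Π(b_u - A_u v)`
is inverse monotone. Comparing `x_ρ` with a large constant vector bounds it above, and comparing
`x_{ρ₁}` with `x_{ρ₂}` shows that `ρ ↦ x_ρ` is nondecreasing, so `x_ρ` converges to some `x*`.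
Dividing the equation by `ρ` shows that the penalty vanishes in the limit, i.e. `A_u x* ≥ b_u`.
If row `i` were strict for every `u`, compactness of `U` would keep it strict for `x_ρ` with `ρ`
large; the penalty in row `i` would then be zero and the equation would contradict strictness
at `u₀`.
-/

open Matrix Filter

open Set Topology

theorem KoMat.mulVec_apply_pos {N : ℕ} {A : Matrix (Fin N) (Fin N) ℝ} (hA : KoMat A)
    {d : Fin N → ℝ} {i : Fin N} (hmax : ∀ j, d j ≤ d i) (hpos : 0 < d i) :
    0 < (A *ᵥ d) i := by
  have hsplit : (A *ᵥ d) i = A i i * d i + ∑ j ∈ Finset.univ.erase i, A i j * d j :=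
    (Finset.add_sum_erase _ _ (Finset.mem_univ i)).symm
  have hoff : ∑ j ∈ Finset.univ.erase i, -|A i j| * d i ≤
      ∑ j ∈ Finset.univ.erase i, A i j * d j :=
    Finset.sum_le_sum fun j hj =>
      (mul_le_mul_of_nonneg_right (neg_abs_le _) hpos.le).trans
        (mul_le_mul_of_nonpos_left (hmax j) (hA.1 i j (Finset.ne_of_mem_erase hj).symm))
  have hdom : 0 < (A i i - ∑ j ∈ Finset.univ.erase i, |A i j|) * d i :=
    mul_pos (sub_pos.2 (hA.2 i)) hpos
  simp only [neg_mul, Finset.sum_neg_distrib] at hoff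
  rw [sub_mul, Finset.sum_mul] at hdom
  linarith

namespace PenaltyTerm

variable {N : ℕ} (P : PenaltyTerm N)

theorem nonneg_s7 (i : Fin N) (y : ℝ) : 0 ≤ P.π i y := by
  rcases le_or_gt y 0 with hy | hy
  · exact (P.eq_zero i y hy).ge
  · exact (P.pos i y hy).le

theorem nonpos_of_le_zero {i : Fin N} {y : ℝ} (h : P.π i y ≤ 0) : y ≤ 0 :=
  not_lt.1 fun hy => (P.pos i y hy).not_ge h

end PenaltyTerm

theorem exists_tendsto_atTop_of_monotoneOn_Ioi {α : Type*} [TopologicalSpace α]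
    [ConditionallyCompletePartialOrderSup α] [SupConvergenceClass α] {f : ℝ → α} {c : ℝ}
    (hf : MonotoneOn f (Ioi c)) (hbdd : BddAbove (f '' Ioi c)) :
    ∃ l, Tendsto f atTop (𝓝 l) := by
  have hmem : ∀ ρ, max ρ (c + 1) ∈ Ioi c := fun ρ => (lt_add_one c).trans_le (le_max_right _ _)
  have hg : Monotone fun ρ => f (max ρ (c + 1)) := fun ρ σ h =>
    hf (hmem ρ) (hmem σ) (max_le_max_right _ h)
  have hgbdd : BddAbove (range fun ρ => f (max ρ (c + 1))) :=
    hbdd.mono (range_subset_iff.2 fun ρ => mem_image_of_mem f (hmem ρ))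
  refine ⟨_, (tendsto_atTop_ciSup hg hgbdd).congr' ?_⟩
  filter_upwards [eventually_ge_atTop (c + 1)] with ρ hρ
  rw [max_eq_left hρ]

section PenalisedHJB

variable {N : ℕ} {𝔄 : ℝ → Matrix (Fin N) (Fin N) ℝ} {𝔅 : ℝ → Fin N → ℝ} {U : Set ℝ}
  {P : PenaltyTerm N} {u₀ : ℝ}

noncomputable def penaltyMax (𝔄 : ℝ → Matrix (Fin N) (Fin N) ℝ) (𝔅 : ℝ → Fin N → ℝ)
    (U : Set ℝ) (P : PenaltyTerm N) (v : Fin N → ℝ) : Fin N → ℝ :=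
  fun i => sSup ((fun u => P.π i ((𝔅 u - 𝔄 u *ᵥ v) i)) '' U)

theorem penHJBEq_iff {ρ : ℝ} {x : Fin N → ℝ} :
    PenHJBEq 𝔄 𝔅 U P u₀ ρ x ↔ 𝔄 u₀ *ᵥ x - 𝔅 u₀ = ρ • penaltyMax 𝔄 𝔅 U P x := by
  simp only [PenHJBEq, funext_iff, sub_eq_zero, Pi.smul_apply, smul_eq_mul, penaltyMax]

theorem penaltyMax_nonneg (v : Fin N → ℝ) : 0 ≤ penaltyMax 𝔄 𝔅 U P v := fun i =>
  Real.sSup_nonneg <| by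
    rintro _ ⟨u, -, rfl⟩
    exact P.nonneg_s7 i _

theorem penaltyMax_apply_eq_zero {v : Fin N → ℝ} {i : Fin N}
    (h : ∀ u ∈ U, 𝔅 u i ≤ (𝔄 u *ᵥ v) i) : penaltyMax 𝔄 𝔅 U P v i = 0 :=
  (Real.sSup_nonpos <| by
    rintro _ ⟨u, hu, rfl⟩
    exact (P.eq_zero i _ (sub_nonpos.2 (h u hu))).le).antisymm (penaltyMax_nonneg v i)

theorem le_penaltyMax (hU : IsCompact U) (hA : ContinuousOn 𝔄 U) (hb : ContinuousOn 𝔅 U)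
    {u : ℝ} (hu : u ∈ U) (v : Fin N → ℝ) (i : Fin N) :
    P.π i ((𝔅 u - 𝔄 u *ᵥ v) i) ≤ penaltyMax 𝔄 𝔅 U P v i := by
  have hcont : ContinuousOn (fun u => P.π i ((𝔅 u - 𝔄 u *ᵥ v) i)) U :=
    (P.cont i).comp_continuousOn <| (continuous_apply i).comp_continuousOn <|
      hb.sub <| (continuous_id.matrix_mulVec continuous_const).comp_continuousOn hA
  exact le_csSup (hU.image_of_continuousOn hcont).bddAbove (mem_image_of_mem _ hu)

theorem penaltyMax_apply_le (hU : IsCompact U) (hA : ContinuousOn 𝔄 U)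
    (hb : ContinuousOn 𝔅 U) {v w : Fin N → ℝ} {i : Fin N}
    (h : ∀ u ∈ U, (𝔄 u *ᵥ w) i ≤ (𝔄 u *ᵥ v) i) :
    penaltyMax 𝔄 𝔅 U P v i ≤ penaltyMax 𝔄 𝔅 U P w i :=
  Real.sSup_le (by
    rintro _ ⟨u, hu, rfl⟩
    exact (P.mono i (sub_le_sub_left (h u hu) _)).trans (le_penaltyMax hU hA hb hu w i))
    (penaltyMax_nonneg w i)

theorem le_of_mulVec_sub_smul_penaltyMax_le (hU : IsCompact U) (hA : ContinuousOn 𝔄 U)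
    (hb : ContinuousOn 𝔅 U) (hKo : ∀ u ∈ U, KoMat (𝔄 u)) {ρ : ℝ} (hu₀ : u₀ ∈ U)
    (hρ : 0 ≤ ρ) {v w : Fin N → ℝ}
    (h : 𝔄 u₀ *ᵥ v - ρ • penaltyMax 𝔄 𝔅 U P v ≤ 𝔄 u₀ *ᵥ w - ρ • penaltyMax 𝔄 𝔅 U P w) :
    v ≤ w := by
  by_contra hvw
  obtain ⟨k, hk⟩ : ∃ k, w k < v k := by simpa [Pi.le_def] using hvw
  have : Nonempty (Fin N) := ⟨k⟩
  obtain ⟨i, hi⟩ := Finite.exists_max (v - w)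
  have hpos : ∀ u ∈ U, (𝔄 u *ᵥ w) i < (𝔄 u *ᵥ v) i := fun u hu => by
    have := (hKo u hu).mulVec_apply_pos hi ((sub_pos.2 hk).trans_le (hi k))
    simpa [mulVec_sub] using this
  have hpen := penaltyMax_apply_le (P := P) hU hA hb fun u hu => (hpos u hu).le
  have hcmp := h i
  simp only [Pi.sub_apply, Pi.smul_apply, smul_eq_mul] at hcmp
  linarith [hpos u₀ hu₀, mul_le_mul_of_nonneg_left hpen hρ]

theorem exists_le_smul_mulVec_one (hU : IsCompact U) (hA : ContinuousOn 𝔄 U)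
    (hb : ContinuousOn 𝔅 U) (hKo : ∀ u ∈ U, KoMat (𝔄 u)) :
    ∃ T : ℝ, ∀ u ∈ U, 𝔅 u ≤ T • (𝔄 u *ᵥ 1) := by
  have hrow : ∀ u ∈ U, ∀ i, 0 < (𝔄 u *ᵥ 1) i := fun u hu i =>
    (hKo u hu).mulVec_apply_pos (fun _ => le_rfl) one_pos
  have hratio : ∀ i, ∃ T : ℝ, ∀ u ∈ U, 𝔅 u i / (𝔄 u *ᵥ 1) i ≤ T := fun i => by
    have hcont : ContinuousOn (fun u => 𝔅 u i / (𝔄 u *ᵥ 1) i) U :=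
      ((continuous_apply i).comp_continuousOn hb).div
        ((continuous_apply i).comp_continuousOn <|
          (continuous_id.matrix_mulVec continuous_const).comp_continuousOn hA)
        fun u hu => (hrow u hu i).ne'
    obtain ⟨T, hT⟩ := (hU.image_of_continuousOn hcont).bddAbove
    exact ⟨T, fun u hu => hT (mem_image_of_mem _ hu)⟩
  choose T hT using hratio
  obtain ⟨T₀, hT₀⟩ := Finite.exists_le T
  refine ⟨T₀, fun u hu i => ?_⟩
  rw [Pi.smul_apply, smul_eq_mul, ← div_le_iff₀ (hrow u hu i)]
  exact (hT i u hu).trans (hT₀ i)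

theorem PenHJBEq.le_smul_one (hU : IsCompact U) (hA : ContinuousOn 𝔄 U)
    (hb : ContinuousOn 𝔅 U) (hKo : ∀ u ∈ U, KoMat (𝔄 u)) {ρ T : ℝ} (hu₀ : u₀ ∈ U)
    (hρ : 0 ≤ ρ) (hT : ∀ u ∈ U, 𝔅 u ≤ T • (𝔄 u *ᵥ 1)) {x : Fin N → ℝ}
    (hx : PenHJBEq 𝔄 𝔅 U P u₀ ρ x) : x ≤ T • 1 := by
  refine le_of_mulVec_sub_smul_penaltyMax_le (P := P) hU hA hb hKo hu₀ hρ ?_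
  have hzero : penaltyMax 𝔄 𝔅 U P (T • 1) = 0 := funext fun i =>
    penaltyMax_apply_eq_zero fun u hu => by simpa [mulVec_smul] using hT u hu i
  rw [hzero, smul_zero, sub_zero, mulVec_smul, sub_eq_iff_eq_add'.1 (penHJBEq_iff.1 hx)]
  simpa using hT u₀ hu₀

theorem PenHJBEq.le_of_le (hU : IsCompact U) (hA : ContinuousOn 𝔄 U)
    (hb : ContinuousOn 𝔅 U) (hKo : ∀ u ∈ U, KoMat (𝔄 u)) {ρ₁ ρ₂ : ℝ} (hu₀ : u₀ ∈ U)
    (hρ₁ : 0 ≤ ρ₁) (hρ : ρ₁ ≤ ρ₂) {x₁ x₂ : Fin N → ℝ} (hx₁ : PenHJBEq 𝔄 𝔅 U P u₀ ρ₁ x₁)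
    (hx₂ : PenHJBEq 𝔄 𝔅 U P u₀ ρ₂ x₂) : x₁ ≤ x₂ := by
  refine le_of_mulVec_sub_smul_penaltyMax_le (P := P) hU hA hb hKo hu₀ hρ₁ fun i => ?_
  have h₁ := congrFun (penHJBEq_iff.1 hx₁) i
  have h₂ := congrFun (penHJBEq_iff.1 hx₂) i
  simp only [Pi.sub_apply, Pi.smul_apply, smul_eq_mul] at h₁ h₂ ⊢
  have hpen : 0 ≤ penaltyMax 𝔄 𝔅 U P x₂ i := penaltyMax_nonneg x₂ i
  linarith [mul_nonneg (sub_nonneg.2 hρ) hpen]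

theorem le_mulVec_of_tendsto_penHJBEq (hU : IsCompact U) (hA : ContinuousOn 𝔄 U)
    (hb : ContinuousOn 𝔅 U) {x : ℝ → Fin N → ℝ} {xstar : Fin N → ℝ}
    (hx : ∀ ρ > (0 : ℝ), PenHJBEq 𝔄 𝔅 U P u₀ ρ (x ρ)) (hlim : Tendsto x atTop (𝓝 xstar))
    {u : ℝ} (hu : u ∈ U) :
    𝔅 u ≤ 𝔄 u *ᵥ xstar := fun i => by
  have hpen : Tendsto (fun ρ => P.π i ((𝔅 u - 𝔄 u *ᵥ x ρ) i)) atTop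
      (𝓝 (P.π i ((𝔅 u - 𝔄 u *ᵥ xstar) i))) :=
    (((P.cont i).comp <| (continuous_apply i).comp <|
      continuous_const.sub (continuous_const.matrix_mulVec continuous_id)).tendsto xstar).comp hlim
  -- by the equation, the penalty is the `u₀`-residual divided by `ρ`, which tends to `0`
  have hres : Tendsto (fun ρ => (𝔄 u₀ *ᵥ x ρ - 𝔅 u₀) i / ρ) atTop (𝓝 0) :=
    ((((continuous_apply i).comp <| (continuous_const.matrix_mulVec continuous_id).sub
      continuous_const).tendsto xstar).comp hlim).div_atTop tendsto_id
  have hle : ∀ᶠ ρ in atTop,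
      P.π i ((𝔅 u - 𝔄 u *ᵥ x ρ) i) ≤ (𝔄 u₀ *ᵥ x ρ - 𝔅 u₀) i / ρ := by
    filter_upwards [eventually_gt_atTop 0] with ρ hρ
    rw [congrFun (penHJBEq_iff.1 (hx ρ hρ)) i, Pi.smul_apply, smul_eq_mul,
      mul_div_cancel_left₀ _ hρ.ne']
    exact le_penaltyMax hU hA hb hu _ i
  simpa using P.nonpos_of_le_zero (le_of_tendsto_of_tendsto hpen hres hle)

theorem eventually_forall_mulVec_sub_apply_pos (hU : IsCompact U) (hA : ContinuousOn 𝔄 U)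
    (hb : ContinuousOn 𝔅 U) {xstar : Fin N → ℝ} {i : Fin N}
    (h : ∀ u ∈ U, 0 < (𝔄 u *ᵥ xstar - 𝔅 u) i) :
    ∀ᶠ v in 𝓝 xstar, ∀ u ∈ U, 0 < (𝔄 u *ᵥ v - 𝔅 u) i := by
  have hcont : ContinuousOn (fun p : (Fin N → ℝ) × ℝ => (𝔄 p.2 *ᵥ p.1 - 𝔅 p.2) i)
      (univ ×ˢ U) :=
    (continuous_apply i).comp_continuousOn <|
      ((continuous_fst.matrix_mulVec continuous_snd).comp_continuousOn
        ((hA.comp continuousOn_snd fun _ hp => hp.2).prodMk continuousOn_fst)).sub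
      (hb.comp continuousOn_snd fun _ hp => hp.2)
  refine (hU.eventually_forall_of_forall_eventually
    (P := fun v u => u ∈ U → 0 < (𝔄 u *ᵥ v - 𝔅 u) i) fun u hu => ?_).mono
    fun v hv u hu => hv u hu hu
  have := (hcont (xstar, u) ⟨mem_univ _, hu⟩).eventually (lt_mem_nhds (h u hu))
  rw [eventually_nhdsWithin_iff] at this
  exact this.mono fun z hz hzU => hz ⟨mem_univ _, hzU⟩

theorem exists_mulVec_sub_apply_eq_zero_of_tendsto_penHJBEq (hU : IsCompact U)
    (hA : ContinuousOn 𝔄 U) (hb : ContinuousOn 𝔅 U) (hu₀ : u₀ ∈ U) {x : ℝ → Fin N → ℝ}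
    {xstar : Fin N → ℝ} (hx : ∀ ρ > (0 : ℝ), PenHJBEq 𝔄 𝔅 U P u₀ ρ (x ρ))
    (hlim : Tendsto x atTop (𝓝 xstar))
    (i : Fin N) : ∃ u ∈ U, (𝔄 u *ᵥ xstar - 𝔅 u) i = 0 := by
  by_contra! hne
  have hpos : ∀ u ∈ U, 0 < (𝔄 u *ᵥ xstar - 𝔅 u) i := fun u hu =>
    (sub_nonneg.2 (le_mulVec_of_tendsto_penHJBEq hU hA hb hx hlim hu i)).lt_of_ne'
      (hne u hu)
  obtain ⟨ρ, hρ, hρpos⟩ := ((hlim.eventually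
    (eventually_forall_mulVec_sub_apply_pos hU hA hb hpos)).and (eventually_gt_atTop 0)).exists
  -- no control is active at `x ρ`, so the equation forces a zero `u₀`-residual
  have hzero : penaltyMax 𝔄 𝔅 U P (x ρ) i = 0 := penaltyMax_apply_eq_zero fun u hu => by
    simpa using (hρ u hu).le
  have heq := congrFun (penHJBEq_iff.1 (hx ρ hρpos)) i
  rw [Pi.smul_apply, hzero, smul_zero] at heq
  exact (hρ u₀ hu₀).ne' heq

end PenalisedHJB

theorem penalised_HJB_convergence_general
    (N : ℕ) (a b : ℝ)
    (𝔄 : ℝ → Matrix (Fin N) (Fin N) ℝ) (𝔅 : ℝ → (Fin N → ℝ))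
    (hAcont : ContinuousOn 𝔄 (Set.Icc a b)) (hbcont : ContinuousOn 𝔅 (Set.Icc a b))
    (hKo : ∀ u ∈ Set.Icc a b, KoMat (𝔄 u))
    (u₀ : ℝ) (hu₀ : u₀ ∈ Set.Icc a b)
    (P : PenaltyTerm N) (x : ℝ → (Fin N → ℝ))
    (hx : ∀ ρ > (0:ℝ), PenHJBEq 𝔄 𝔅 (Set.Icc a b) P u₀ ρ (x ρ)) :
    ∃ xstar : Fin N → ℝ,
      Tendsto x atTop (nhds xstar) ∧
      ∀ i : Fin N,
        IsLeast ((fun u => (𝔄 u *ᵥ xstar - 𝔅 u) i) '' Set.Icc a b) 0 := by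
  have hU : IsCompact (Icc a b) := isCompact_Icc
  obtain ⟨T, hT⟩ := exists_le_smul_mulVec_one hU hAcont hbcont hKo
  have hmono : MonotoneOn x (Ioi 0) := fun ρ₁ hρ₁ ρ₂ hρ₂ h =>
    (hx ρ₁ hρ₁).le_of_le hU hAcont hbcont hKo hu₀ (le_of_lt hρ₁) h (hx ρ₂ hρ₂)
  have hbdd : BddAbove (x '' Ioi 0) := ⟨T • 1, by
    rintro _ ⟨ρ, hρ, rfl⟩
    exact (hx ρ hρ).le_smul_one hU hAcont hbcont hKo hu₀ (le_of_lt hρ) hT⟩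
  obtain ⟨xstar, hlim⟩ := exists_tendsto_atTop_of_monotoneOn_Ioi hmono hbdd
  refine ⟨xstar, hlim, fun i => ⟨?_, ?_⟩⟩
  · exact exists_mulVec_sub_apply_eq_zero_of_tendsto_penHJBEq hU hAcont hbcont hu₀ hx hlim i
  · rintro _ ⟨u, hu, rfl⟩
    exact sub_nonneg.2 (le_mulVec_of_tendsto_penHJBEq hU hAcont hbcont hx hlim hu i)

/-- As `ρ → ∞`, the solutions `x_ρ` of the penalised HJB equation converge to a
limit `x*` which solves the discrete HJB equation `min_{u∈U}{A_u x* - b_u} = 0`. -/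
theorem penalised_HJB_convergence
    (N : ℕ) (hN : 0 < N) (a b : ℝ) (hab : a ≤ b)
    (𝔄 : ℝ → Matrix (Fin N) (Fin N) ℝ) (𝔅 : ℝ → (Fin N → ℝ))
    (hAcont : ContinuousOn 𝔄 (Set.Icc a b)) (hbcont : ContinuousOn 𝔅 (Set.Icc a b))
    (hKo : ∀ u ∈ Set.Icc a b, KoMat (𝔄 u))
    (u₀ : ℝ) (hu₀ : u₀ ∈ Set.Icc a b)
    (P : PenaltyTerm N) (x : ℝ → (Fin N → ℝ))
    (hx : ∀ ρ > (0:ℝ), PenHJBEq 𝔄 𝔅 (Set.Icc a b) P u₀ ρ (x ρ)) :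
    ∃ xstar : Fin N → ℝ,
      Tendsto x atTop (nhds xstar) ∧
      ∀ i : Fin N,
        IsLeast ((fun u => (𝔄 u *ᵥ xstar - 𝔅 u) i) '' Set.Icc a b) 0 :=
  penalised_HJB_convergence_general N a b 𝔄 𝔅 hAcont hbcont hKo u₀ hu₀ P x hx
end

section
/- Let (x^n)_{n≥0} be a sequence generated by the Newton-like iteration for the penalised HJB equation with Π(y) = max{y,0} from an arbitrary starting value x^0 ∈ ℝ^N. Then the iteration is well defined (each matrix A_{u_0} + ρ A^min(x^n) lies in K^o_N and is invertible) and the iterates are monotone: x^n ≤ x^{n+1} componentwise for every n ≥ 1. -/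
open Matrix Filter

/-- The matrix `A^min(y)`: its `i`-th row is the `i`-th row of `A_{u^min(y,i)}`
if `(b_{u^min(y,i)} - A_{u^min(y,i)} y)_i > 0`, and the zero row otherwise. -/
noncomputable def AminMat {N : ℕ} (𝔄 : ℝ → Matrix (Fin N) (Fin N) ℝ)
    (𝔅 : ℝ → (Fin N → ℝ)) (umin : (Fin N → ℝ) → Fin N → ℝ) (y : Fin N → ℝ) :
    Matrix (Fin N) (Fin N) ℝ :=
  fun i j =>
    if 0 < (𝔅 (umin y i) - 𝔄 (umin y i) *ᵥ y) i then 𝔄 (umin y i) i j else 0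

/-- The vector `b^min(y)`: its `i`-th entry is `(b_{u^min(y,i)})_i`
if `(b_{u^min(y,i)} - A_{u^min(y,i)} y)_i > 0`, and `0` otherwise. -/
noncomputable def bminVec {N : ℕ} (𝔄 : ℝ → Matrix (Fin N) (Fin N) ℝ)
    (𝔅 : ℝ → (Fin N → ℝ)) (umin : (Fin N → ℝ) → Fin N → ℝ) (y : Fin N → ℝ) :
    Fin N → ℝ :=
  fun i =>
    if 0 < (𝔅 (umin y i) - 𝔄 (umin y i) *ᵥ y) i then 𝔅 (umin y i) i else 0

/-!
Every matrix of the iteration is `A_{u₀}` plus `ρ` times a matrix whose rows are rows of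
`K^o_N`-matrices or zero, so it stays in `K^o_N`, and `K^o_N`-matrices are inverse-positive
(look at a row where the vector is minimal). For `n ≥ 1`, subtracting the equations of steps
`n - 1` and `n` gives, with `M(y) = A_{u₀} + ρ Aᵐⁱⁿ(y)`,
`M(xⁿ) (xⁿ⁺¹ - xⁿ) = ρ ((bᵐⁱⁿ(xⁿ) - Aᵐⁱⁿ(xⁿ) xⁿ) - (bᵐⁱⁿ(xⁿ⁻¹) - Aᵐⁱⁿ(xⁿ⁻¹) xⁿ))`,
and the right side is nonnegative because `u^min(xⁿ, i)` maximises `(b_v - A_v xⁿ)_i`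
while the other control only enters through a positive part.
-/

namespace KoMat

variable {N : ℕ} {A : Matrix (Fin N) (Fin N) ℝ}

lemma isUnit (hA : KoMat A) : IsUnit A := by
  rw [Matrix.isUnit_iff_isUnit_det, isUnit_iff_ne_zero]
  refine det_ne_zero_of_sum_row_lt_diag fun r => ?_
  have hdiag : 0 ≤ A r r := (Finset.sum_nonneg fun s _ => abs_nonneg _).trans (hA.2 r).le
  simpa [Real.norm_eq_abs, abs_of_nonneg hdiag] using hA.2 r

lemma sum_row_pos (hA : KoMat A) (r : Fin N) : 0 < ∑ s, A r s := by
  rw [← Finset.add_sum_erase _ _ (Finset.mem_univ r)]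
  have : -∑ s ∈ Finset.univ.erase r, |A r s| ≤ ∑ s ∈ Finset.univ.erase r, A r s := by
    rw [← Finset.sum_neg_distrib]
    exact Finset.sum_le_sum fun s _ => neg_abs_le _
  linarith [hA.2 r]

lemma mulVec_apply_le_of_forall_le (hA : KoMat A) {w : Fin N → ℝ} {r : Fin N}
    (hmin : ∀ s, w r ≤ w s) : (A *ᵥ w) r ≤ (∑ s, A r s) * w r := by
  rw [Matrix.mulVec, dotProduct, Finset.sum_mul]
  refine Finset.sum_le_sum fun s _ => ?_
  rcases eq_or_ne s r with rfl | hs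
  · exact le_rfl
  · exact mul_le_mul_of_nonpos_left (hmin s) (hA.1 r s hs.symm)

lemma nonneg_of_mulVec_nonneg (hA : KoMat A) {w : Fin N → ℝ} (hw : 0 ≤ A *ᵥ w) :
    0 ≤ w := by
  intro i
  obtain ⟨r, -, hmin⟩ := Finset.exists_min_image Finset.univ w ⟨i, Finset.mem_univ i⟩
  have hr : 0 ≤ (∑ s, A r s) * w r :=
    (hw r).trans (hA.mulVec_apply_le_of_forall_le fun s => hmin s (Finset.mem_univ s))
  exact (nonneg_of_mul_nonneg_right hr (hA.sum_row_pos r)).trans (hmin i (Finset.mem_univ i))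

lemma add_smul (hA : KoMat A) {B : Matrix (Fin N) (Fin N) ℝ}
    (hB_off : ∀ r s, r ≠ s → B r s ≤ 0)
    (hB_row : ∀ r, ∑ s ∈ Finset.univ.erase r, |B r s| ≤ B r r) {ρ : ℝ} (hρ : 0 ≤ ρ) :
    KoMat (A + ρ • B) := by
  refine ⟨fun r s hrs => ?_, fun r => ?_⟩
  · exact add_nonpos (hA.1 r s hrs) (mul_nonpos_of_nonneg_of_nonpos hρ (hB_off r s hrs))
  · calc ∑ s ∈ Finset.univ.erase r, |(A + ρ • B) r s|
        ≤ ∑ s ∈ Finset.univ.erase r, (|A r s| + ρ * |B r s|) := by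
          refine Finset.sum_le_sum fun s _ => ?_
          simpa [abs_mul, abs_of_nonneg hρ] using abs_add_le (A r s) (ρ * B r s)
      _ = ∑ s ∈ Finset.univ.erase r, |A r s| + ρ * ∑ s ∈ Finset.univ.erase r, |B r s| := by
          rw [Finset.sum_add_distrib, Finset.mul_sum]
      _ < A r r + ρ * B r r :=
          add_lt_add_of_lt_of_le (hA.2 r) (mul_le_mul_of_nonneg_left (hB_row r) hρ)
      _ = (A + ρ • B) r r := rfl

end KoMat

section Penalty

variable {N : ℕ} {𝔄 : ℝ → Matrix (Fin N) (Fin N) ℝ} {𝔅 : ℝ → (Fin N → ℝ)}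
  {umin : (Fin N → ℝ) → Fin N → ℝ}

lemma aminMat_apply_nonpos (hK : ∀ y i, KoMat (𝔄 (umin y i))) (y : Fin N → ℝ)
    {r s : Fin N} (hrs : r ≠ s) : AminMat 𝔄 𝔅 umin y r s ≤ 0 := by
  unfold AminMat
  split_ifs
  · exact (hK y r).1 r s hrs
  · exact le_rfl

lemma sum_abs_aminMat_le (hK : ∀ y i, KoMat (𝔄 (umin y i))) (y : Fin N → ℝ) (r : Fin N) :
    ∑ s ∈ Finset.univ.erase r, |AminMat 𝔄 𝔅 umin y r s| ≤ AminMat 𝔄 𝔅 umin y r r := by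
  unfold AminMat
  split_ifs
  · exact ((hK y r).2 r).le
  · simp

lemma koMat_add_smul_aminMat (hK : ∀ y i, KoMat (𝔄 (umin y i)))
    {A : Matrix (Fin N) (Fin N) ℝ} (hA : KoMat A) {ρ : ℝ} (hρ : 0 ≤ ρ) (y : Fin N → ℝ) :
    KoMat (A + ρ • AminMat 𝔄 𝔅 umin y) :=
  hA.add_smul (fun _ _ => aminMat_apply_nonpos hK y) (sum_abs_aminMat_le hK y) hρ

lemma bminVec_sub_aminMat_mulVec_apply (z y : Fin N → ℝ) (i : Fin N) :
    (bminVec 𝔄 𝔅 umin z - AminMat 𝔄 𝔅 umin z *ᵥ y) i =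
      if 0 < (𝔅 (umin z i) - 𝔄 (umin z i) *ᵥ z) i then
        (𝔅 (umin z i) - 𝔄 (umin z i) *ᵥ y) i
      else 0 := by
  simp only [bminVec, AminMat, Pi.sub_apply, Matrix.mulVec, dotProduct]
  split_ifs <;> simp

lemma bminVec_sub_aminMat_mulVec_le
    (hmax : ∀ z y i,
      (𝔅 (umin z i) - 𝔄 (umin z i) *ᵥ y) i ≤ (𝔅 (umin y i) - 𝔄 (umin y i) *ᵥ y) i)
    (z y : Fin N → ℝ) :
    bminVec 𝔄 𝔅 umin z - AminMat 𝔄 𝔅 umin z *ᵥ y ≤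
      bminVec 𝔄 𝔅 umin y - AminMat 𝔄 𝔅 umin y *ᵥ y := by
  intro i
  rw [bminVec_sub_aminMat_mulVec_apply, bminVec_sub_aminMat_mulVec_apply]
  have := hmax z y i
  split_ifs <;> linarith

end Penalty

lemma mulVec_sub_nonneg_of_residual_le {N : ℕ} {A₀ B B' : Matrix (Fin N) (Fin N) ℝ}
    {b₀ c c' x' x'' : Fin N → ℝ} {ρ : ℝ} (hρ : 0 ≤ ρ)
    (h' : (A₀ + ρ • B') *ᵥ x' = b₀ + ρ • c') (h'' : (A₀ + ρ • B) *ᵥ x'' = b₀ + ρ • c)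
    (hres : c' - B' *ᵥ x' ≤ c - B *ᵥ x') :
    0 ≤ (A₀ + ρ • B) *ᵥ (x'' - x') := by
  have hdiff :
      (A₀ + ρ • B) *ᵥ (x'' - x') = ρ • ((c - B *ᵥ x') - (c' - B' *ᵥ x')) := by
    rw [Matrix.mulVec_sub, h'']
    simp only [Matrix.add_mulVec, Matrix.smul_mulVec] at h' ⊢
    linear_combination (norm := module) -h'
  rw [hdiff]
  exact smul_nonneg hρ (sub_nonneg.mpr hres)

theorem newton_like_HJB_monotone_general
    (N : ℕ) (a b : ℝ)
    (𝔄 : ℝ → Matrix (Fin N) (Fin N) ℝ) (𝔅 : ℝ → (Fin N → ℝ))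
    (hKo : ∀ u ∈ Set.Icc a b, KoMat (𝔄 u))
    (u₀ : ℝ) (hu₀ : u₀ ∈ Set.Icc a b) (ρ : ℝ) (hρ : 0 < ρ)
    (umin : (Fin N → ℝ) → Fin N → ℝ)
    (hsel : ∀ (y : Fin N → ℝ) (i : Fin N), umin y i ∈ Set.Icc a b ∧
      IsGreatest ((fun v => (𝔅 v - 𝔄 v *ᵥ y) i) '' Set.Icc a b)
        ((𝔅 (umin y i) - 𝔄 (umin y i) *ᵥ y) i))
    (x : ℕ → (Fin N → ℝ))
    (hiter : ∀ n : ℕ,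
      (𝔄 u₀ + ρ • AminMat 𝔄 𝔅 umin (x n)) *ᵥ x (n + 1) =
        𝔅 u₀ + ρ • bminVec 𝔄 𝔅 umin (x n)) :
    (∀ y : Fin N → ℝ,
        KoMat (𝔄 u₀ + ρ • AminMat 𝔄 𝔅 umin y) ∧
        IsUnit (𝔄 u₀ + ρ • AminMat 𝔄 𝔅 umin y)) ∧
    ∀ n : ℕ, 1 ≤ n → x n ≤ x (n + 1) := by
  have hK : ∀ y i, KoMat (𝔄 (umin y i)) := fun y i => hKo _ (hsel y i).1
  have hmax : ∀ z y i, (𝔅 (umin z i) - 𝔄 (umin z i) *ᵥ y) i ≤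
      (𝔅 (umin y i) - 𝔄 (umin y i) *ᵥ y) i :=
    fun z y i => (hsel y i).2.2 ⟨umin z i, (hsel z i).1, rfl⟩
  have hM : ∀ y, KoMat (𝔄 u₀ + ρ • AminMat 𝔄 𝔅 umin y) :=
    koMat_add_smul_aminMat hK (hKo u₀ hu₀) hρ.le
  refine ⟨fun y => ⟨hM y, (hM y).isUnit⟩, fun n hn => ?_⟩
  obtain ⟨m, rfl⟩ := Nat.exists_eq_add_of_le' hn
  have hstep := mulVec_sub_nonneg_of_residual_le hρ.le (hiter m) (hiter (m + 1))
    (bminVec_sub_aminMat_mulVec_le hmax (x m) (x (m + 1)))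
  exact sub_nonneg.mp ((hM (x (m + 1))).nonneg_of_mulVec_nonneg hstep)

/-- The Newton-like iteration for the penalised HJB equation (with
`Π(y) = max{y,0}`) is well defined and its iterates are monotone from step 1 on. -/
theorem newton_like_HJB_monotone
    (N : ℕ) (hN : 0 < N) (a b : ℝ) (hab : a ≤ b)
    (𝔄 : ℝ → Matrix (Fin N) (Fin N) ℝ) (𝔅 : ℝ → (Fin N → ℝ))
    (hAcont : ContinuousOn 𝔄 (Set.Icc a b)) (hbcont : ContinuousOn 𝔅 (Set.Icc a b))
    (hKo : ∀ u ∈ Set.Icc a b, KoMat (𝔄 u))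
    (u₀ : ℝ) (hu₀ : u₀ ∈ Set.Icc a b) (ρ : ℝ) (hρ : 0 < ρ)
    (umin : (Fin N → ℝ) → Fin N → ℝ)
    (hsel : ∀ (y : Fin N → ℝ) (i : Fin N), umin y i ∈ Set.Icc a b ∧
      IsGreatest ((fun v => (𝔅 v - 𝔄 v *ᵥ y) i) '' Set.Icc a b)
        ((𝔅 (umin y i) - 𝔄 (umin y i) *ᵥ y) i))
    (x : ℕ → (Fin N → ℝ))
    (hiter : ∀ n : ℕ,
      (𝔄 u₀ + ρ • AminMat 𝔄 𝔅 umin (x n)) *ᵥ x (n + 1) =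
        𝔅 u₀ + ρ • bminVec 𝔄 𝔅 umin (x n)) :
    (∀ y : Fin N → ℝ,
        KoMat (𝔄 u₀ + ρ • AminMat 𝔄 𝔅 umin y) ∧
        IsUnit (𝔄 u₀ + ρ • AminMat 𝔄 𝔅 umin y)) ∧
    ∀ n : ℕ, 1 ≤ n → x n ≤ x (n + 1) :=
  newton_like_HJB_monotone_general N a b 𝔄 𝔅 hKo u₀ hu₀ ρ hρ umin hsel x hiter
end

section
/- There exists a constant C > 0 such that for every starting value x^0 ∈ ℝ^N, the sequence (x^n)_{n≥0} generated by the Newton-like iteration for the penalised HJB equation with Π(y) = max{y,0} satisfies ‖x^n‖∞ ≤ C for all n ≥ 1. -/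
open Matrix Filter

/-! The rows of a matrix in `K^o_N` have positive margin, and adding a nonnegative multiple of
`A^min(y)` cannot decrease the margin, since off-diagonal entries of the same sign add in
absolute value; so every iteration matrix is strictly diagonally dominant
with margin bounded below by that of `A_{u_0}`. Such a matrix satisfies `δ ‖x‖∞ ≤ ‖M x‖∞`,
while the right-hand side `b_{u_0} + ρ b^min(x^n)` is bounded by `‖b_{u_0}‖∞ + ρ max_U ‖b_u‖∞`
independently of `x^n`. -/

open Topology

section DiagonalDominance

variable {ι : Type*} [Fintype ι] [DecidableEq ι]

def diagDomMargin (A : Matrix ι ι ℝ) (i : ι) : ℝ :=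
  A i i - ∑ j ∈ Finset.univ.erase i, |A i j|

theorem mul_norm_le_norm_mulVec {A : Matrix ι ι ℝ} {δ : ℝ} (hδ : ∀ i, δ ≤ diagDomMargin A i)
    (x : ι → ℝ) : δ * ‖x‖ ≤ ‖A *ᵥ x‖ := by
  rcases isEmpty_or_nonempty ι with hι | hι
  · simp [Subsingleton.elim x 0]
  obtain ⟨i, hi : ‖x i‖ = ‖x‖⟩ := (IsGreatest.pi_norm x).1
  have hxj : ∀ j, |x j| ≤ |x i| := fun j => by
    simpa only [← Real.norm_eq_abs, hi] using norm_le_pi_norm x j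
  have hrow : (A *ᵥ x) i = A i i * x i + ∑ j ∈ Finset.univ.erase i, A i j * x j := by
    rw [mulVec, dotProduct, ← Finset.add_sum_erase _ _ (Finset.mem_univ i)]
  have hoff : |∑ j ∈ Finset.univ.erase i, A i j * x j|
      ≤ (∑ j ∈ Finset.univ.erase i, |A i j|) * |x i| := by
    rw [Finset.sum_mul]
    refine (Finset.abs_sum_le_sum_abs _ _).trans (Finset.sum_le_sum fun j _ => ?_)
    rw [abs_mul]
    exact mul_le_mul_of_nonneg_left (hxj j) (abs_nonneg _)
  calc δ * ‖x‖ = δ * |x i| := by rw [← hi, Real.norm_eq_abs]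
    _ ≤ diagDomMargin A i * |x i| := mul_le_mul_of_nonneg_right (hδ i) (abs_nonneg _)
    _ ≤ |A i i * x i| - |∑ j ∈ Finset.univ.erase i, A i j * x j| := by
      rw [diagDomMargin, sub_mul, abs_mul]
      exact sub_le_sub (mul_le_mul_of_nonneg_right (le_abs_self _) (abs_nonneg _)) hoff
    _ ≤ |(A *ᵥ x) i| := by
      rw [hrow]
      exact abs_sub_abs_le_abs_add _ _
    _ ≤ ‖A *ᵥ x‖ := by
      rw [← Real.norm_eq_abs]
      exact norm_le_pi_norm _ i

theorem diagDomMargin_add_smul {A B : Matrix ι ι ℝ} {i : ι} {ρ : ℝ} (hρ : 0 ≤ ρ)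
    (hA : ∀ j, j ≠ i → A i j ≤ 0) (hB : ∀ j, j ≠ i → B i j ≤ 0) :
    diagDomMargin (A + ρ • B) i = diagDomMargin A i + ρ * diagDomMargin B i := by
  have habs : ∀ j ∈ Finset.univ.erase i, |(A + ρ • B) i j| = |A i j| + ρ * |B i j| := by
    intro j hj
    have hji := Finset.ne_of_mem_erase hj
    have hAij := hA j hji
    have hBij := hB j hji
    simp only [Matrix.add_apply, Matrix.smul_apply, smul_eq_mul]
    rw [abs_of_nonpos hAij, abs_of_nonpos hBij, abs_of_nonpos (by nlinarith)]
    ring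
  rw [diagDomMargin, diagDomMargin, diagDomMargin, Finset.sum_congr rfl habs,
    Finset.sum_add_distrib, ← Finset.mul_sum, Matrix.add_apply, Matrix.smul_apply, smul_eq_mul]
  ring

end DiagonalDominance

theorem exists_pos_forall_le_of_forall_pos {ι : Type*} [Finite ι] {f : ι → ℝ}
    (hf : ∀ i, 0 < f i) : ∃ δ > 0, ∀ i, δ ≤ f i := by
  have hnear : ∀ᶠ δ in 𝓝[>] (0 : ℝ), ∀ i, δ ≤ f i :=
    eventually_all.2 fun i => nhdsWithin_le_nhds (eventually_le_nhds (hf i))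
  exact (hnear.and self_mem_nhdsWithin).exists.imp fun δ h => ⟨h.2, h.1⟩

theorem KoMat.diagDomMargin_pos {N : ℕ} {A : Matrix (Fin N) (Fin N) ℝ} (hA : KoMat A)
    (i : Fin N) : 0 < diagDomMargin A i :=
  sub_pos.2 (hA.2 i)

section NewtonIteration

variable {N : ℕ} {𝔄 : ℝ → Matrix (Fin N) (Fin N) ℝ} {𝔅 : ℝ → (Fin N → ℝ)}
  {umin : (Fin N → ℝ) → Fin N → ℝ} {y : Fin N → ℝ}

theorem AminMat_apply_nonpos (hKo : ∀ i, KoMat (𝔄 (umin y i))) {i j : Fin N} (hji : j ≠ i) :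
    AminMat 𝔄 𝔅 umin y i j ≤ 0 := by
  unfold AminMat
  split_ifs
  · exact (hKo i).1 i j hji.symm
  · exact le_rfl

theorem diagDomMargin_AminMat_nonneg (hKo : ∀ i, KoMat (𝔄 (umin y i))) (i : Fin N) :
    0 ≤ diagDomMargin (AminMat 𝔄 𝔅 umin y) i := by
  unfold diagDomMargin AminMat
  split_ifs
  · exact ((hKo i).diagDomMargin_pos i).le
  · simp

theorem diagDomMargin_le_add_smul_AminMat {A : Matrix (Fin N) (Fin N) ℝ} {ρ : ℝ} (hA : KoMat A)
    (hρ : 0 ≤ ρ) (hKo : ∀ i, KoMat (𝔄 (umin y i))) (i : Fin N) :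
    diagDomMargin A i ≤ diagDomMargin (A + ρ • AminMat 𝔄 𝔅 umin y) i := by
  rw [diagDomMargin_add_smul hρ (fun j hji => hA.1 i j hji.symm)
    (fun j hji => AminMat_apply_nonpos hKo hji)]
  exact le_add_of_nonneg_right (mul_nonneg hρ (diagDomMargin_AminMat_nonneg hKo i))

theorem norm_bminVec_le {β : ℝ} (hβ₀ : 0 ≤ β) (hβ : ∀ i, ‖𝔅 (umin y i)‖ ≤ β) :
    ‖bminVec 𝔄 𝔅 umin y‖ ≤ β := by
  refine (pi_norm_le_iff_of_nonneg hβ₀).2 fun i => ?_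
  unfold bminVec
  split_ifs
  · exact (norm_le_pi_norm _ i).trans (hβ i)
  · simpa using hβ₀

end NewtonIteration

theorem newton_like_HJB_bounded_general
    (N : ℕ) (a b : ℝ)
    (𝔄 : ℝ → Matrix (Fin N) (Fin N) ℝ) (𝔅 : ℝ → (Fin N → ℝ))
    (hbcont : ContinuousOn 𝔅 (Set.Icc a b))
    (hKo : ∀ u ∈ Set.Icc a b, KoMat (𝔄 u))
    (u₀ : ℝ) (hu₀ : u₀ ∈ Set.Icc a b) (ρ : ℝ) (hρ : 0 < ρ)
    (umin : (Fin N → ℝ) → Fin N → ℝ)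
    (hsel : ∀ (y : Fin N → ℝ) (i : Fin N), umin y i ∈ Set.Icc a b ∧
      IsGreatest ((fun v => (𝔅 v - 𝔄 v *ᵥ y) i) '' Set.Icc a b)
        ((𝔅 (umin y i) - 𝔄 (umin y i) *ᵥ y) i)) :
    ∃ C > (0:ℝ), ∀ x : ℕ → (Fin N → ℝ),
      (∀ n : ℕ,
        (𝔄 u₀ + ρ • AminMat 𝔄 𝔅 umin (x n)) *ᵥ x (n + 1) =
          𝔅 u₀ + ρ • bminVec 𝔄 𝔅 umin (x n)) →
      ∀ n : ℕ, 1 ≤ n → ‖x n‖ ≤ C := by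
  obtain ⟨β, hβ⟩ := isCompact_Icc.exists_bound_of_continuousOn hbcont
  have hβ₀ : 0 ≤ β := (norm_nonneg _).trans (hβ u₀ hu₀)
  obtain ⟨δ, hδ, hδA⟩ := exists_pos_forall_le_of_forall_pos (hKo u₀ hu₀).diagDomMargin_pos
  have hKo_sel : ∀ y i, KoMat (𝔄 (umin y i)) := fun y i => hKo _ (hsel y i).1
  set B := ‖𝔅 u₀‖ + ρ * β
  refine ⟨B / δ + 1, by positivity, fun x hx n hn => ?_⟩
  obtain ⟨m, rfl⟩ := Nat.exists_eq_add_of_le' hn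
  have hdom : ∀ i, δ ≤ diagDomMargin (𝔄 u₀ + ρ • AminMat 𝔄 𝔅 umin (x m)) i := fun i =>
    (hδA i).trans (diagDomMargin_le_add_smul_AminMat (hKo u₀ hu₀) hρ.le (hKo_sel (x m)) i)
  have hrhs : ‖𝔅 u₀ + ρ • bminVec 𝔄 𝔅 umin (x m)‖ ≤ B := by
    refine (norm_add_le _ _).trans (add_le_add_right ?_ _)
    rw [norm_smul, Real.norm_of_nonneg hρ.le]
    exact mul_le_mul_of_nonneg_left (norm_bminVec_le hβ₀ fun i => hβ _ (hsel _ i).1) hρ.le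
  have hbound : δ * ‖x (m + 1)‖ ≤ B := (mul_norm_le_norm_mulVec hdom _).trans (hx m ▸ hrhs)
  have hB : 0 ≤ B / δ := by positivity
  linarith [(le_div_iff₀' hδ).2 hbound]

/-- The iterates of the Newton-like iteration for the penalised HJB equation
(with `Π(y) = max{y,0}`) are bounded from step 1 on, uniformly in the starting
value. -/
theorem newton_like_HJB_bounded
    (N : ℕ) (hN : 0 < N) (a b : ℝ) (hab : a ≤ b)
    (𝔄 : ℝ → Matrix (Fin N) (Fin N) ℝ) (𝔅 : ℝ → (Fin N → ℝ))
    (hAcont : ContinuousOn 𝔄 (Set.Icc a b)) (hbcont : ContinuousOn 𝔅 (Set.Icc a b))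
    (hKo : ∀ u ∈ Set.Icc a b, KoMat (𝔄 u))
    (u₀ : ℝ) (hu₀ : u₀ ∈ Set.Icc a b) (ρ : ℝ) (hρ : 0 < ρ)
    (umin : (Fin N → ℝ) → Fin N → ℝ)
    (hsel : ∀ (y : Fin N → ℝ) (i : Fin N), umin y i ∈ Set.Icc a b ∧
      IsGreatest ((fun v => (𝔅 v - 𝔄 v *ᵥ y) i) '' Set.Icc a b)
        ((𝔅 (umin y i) - 𝔄 (umin y i) *ᵥ y) i)) :
    ∃ C > (0:ℝ), ∀ x : ℕ → (Fin N → ℝ),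
      (∀ n : ℕ,
        (𝔄 u₀ + ρ • AminMat 𝔄 𝔅 umin (x n)) *ᵥ x (n + 1) =
          𝔅 u₀ + ρ • bminVec 𝔄 𝔅 umin (x n)) →
      ∀ n : ℕ, 1 ≤ n → ‖x n‖ ≤ C :=
  newton_like_HJB_bounded_general N a b 𝔄 𝔅 hbcont hKo u₀ hu₀ ρ hρ umin hsel
end

section
/- For every starting value x^0 ∈ ℝ^N, the sequence (x^n)_{n≥0} generated by the Newton-like iteration for the penalised HJB equation with Π(y) = max{y,0} converges to a limit x_ρ ∈ ℝ^N which satisfies (A_{u_0}x_ρ − b_{u_0}) − ρ·max_{u∈U} max{b_u − A_u x_ρ , 0} = 0. -/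
open Matrix Filter

/-!
From `n = 1` on the iterates increase. The Newton system at `x n` linearises the maximum with the
controls optimal for `x n`, which underestimate the maximum at any other point; hence the
penalised residual at `x (n + 1)` is `≤ 0`, and the next increment solves a system with a strictly
diagonally dominant Z-matrix and nonnegative right-hand side. Every Newton matrix is diagonally
dominant with the margin of `A_{u₀}`, which bounds the iterates uniformly, so they converge. The
residual at `x n` is `M_n (x n - x (n + 1))` with `M_n` uniformly bounded, and it is continuous
because the maximised affine maps are uniformly Lipschitz; so it vanishes at the limit.
-/

open Finset Topology

section DiagonalDominance

variable {n : Type*}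

def IsZMatrix (M : Matrix n n ℝ) : Prop :=
  ∀ r s, r ≠ s → M r s ≤ 0

theorem IsZMatrix.add_smul {A B : Matrix n n ℝ} {ρ : ℝ} (hA : IsZMatrix A) (hB : IsZMatrix B)
    (hρ : 0 ≤ ρ) : IsZMatrix (A + ρ • B) := fun r s hrs => by
  simpa using add_nonpos (hA r s hrs) (mul_nonpos_of_nonneg_of_nonpos hρ (hB r s hrs))

variable [Fintype n] [DecidableEq n]

def DiagDominantBy (δ : ℝ) (M : Matrix n n ℝ) : Prop :=
  ∀ r, ∑ s ∈ univ.erase r, |M r s| + δ ≤ M r r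

theorem mulVec_apply_eq_diag_add_sum_erase (M : Matrix n n ℝ) (z : n → ℝ) (r : n) :
    (M *ᵥ z) r = M r r * z r + ∑ s ∈ univ.erase r, M r s * z s :=
  (add_sum_erase _ _ (mem_univ r)).symm

theorem DiagDominantBy.add_smul {A B : Matrix n n ℝ} {δ ρ : ℝ} (hA : DiagDominantBy δ A)
    (hAZ : IsZMatrix A) (hB : DiagDominantBy 0 B) (hBZ : IsZMatrix B) (hρ : 0 ≤ ρ) :
    DiagDominantBy δ (A + ρ • B) := by
  intro r
  have hoff : ∑ s ∈ univ.erase r, |(A + ρ • B) r s| =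
      ∑ s ∈ univ.erase r, |A r s| + ρ * ∑ s ∈ univ.erase r, |B r s| := by
    rw [mul_sum, ← sum_add_distrib]
    refine sum_congr rfl fun s hs => ?_
    have hA' := hAZ r s (ne_of_mem_erase hs).symm
    have hB' := hBZ r s (ne_of_mem_erase hs).symm
    rw [Matrix.add_apply, Matrix.smul_apply, smul_eq_mul, abs_of_nonpos (by nlinarith), abs_of_nonpos hA',
      abs_of_nonpos hB']
    ring
  rw [hoff, Matrix.add_apply, Matrix.smul_apply, smul_eq_mul]
  nlinarith [hA r, hB r]

theorem DiagDominantBy.sum_abs_lt {M : Matrix n n ℝ} {δ : ℝ} (h : DiagDominantBy δ M)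
    (hδ : 0 < δ) (r : n) : ∑ s ∈ univ.erase r, |M r s| < M r r := by
  linarith [h r]

theorem exists_diagDominantBy_of_sum_abs_lt {M : Matrix n n ℝ}
    (h : ∀ r, ∑ s ∈ univ.erase r, |M r s| < M r r) : ∃ δ > 0, DiagDominantBy δ M := by
  have hev : ∀ᶠ δ in 𝓝[>] (0 : ℝ), DiagDominantBy δ M :=
    nhdsWithin_le_nhds <| eventually_all.2 fun r =>
      (eventually_lt_nhds (sub_pos.2 (h r))).mono fun δ hδ => by linarith
  exact (hev.and self_mem_nhdsWithin).exists.imp fun δ hδ => ⟨hδ.2, hδ.1⟩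

/-- Inverse positivity: at an index where `z` is smallest, a negative value of `z` would make
the corresponding entry of `M *ᵥ z` negative. -/
theorem IsZMatrix.nonneg_of_nonneg_mulVec {M : Matrix n n ℝ} {z : n → ℝ} (hZ : IsZMatrix M)
    (hdom : ∀ r, ∑ s ∈ univ.erase r, |M r s| < M r r) (h : 0 ≤ M *ᵥ z) : 0 ≤ z := by
  intro i₀
  by_contra! hneg
  obtain ⟨i, -, hi⟩ := exists_min_image univ z ⟨i₀, mem_univ i₀⟩
  have hzi : z i < 0 := (hi i₀ (mem_univ i₀)).trans_lt hneg
  have hoff : ∑ s ∈ univ.erase i, M i s * z s ≤ -(∑ s ∈ univ.erase i, |M i s|) * z i := by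
    rw [← sum_neg_distrib, sum_mul]
    refine sum_le_sum fun s hs => ?_
    have hMs := hZ i s (ne_of_mem_erase hs).symm
    rw [abs_of_nonpos hMs, neg_neg]
    exact mul_le_mul_of_nonpos_left (hi s (mem_univ s)) hMs
  have hi₀ := h i
  rw [Pi.zero_apply, mulVec_apply_eq_diag_add_sum_erase] at hi₀
  nlinarith [hdom i]

theorem DiagDominantBy.mul_norm_le_norm_mulVec {M : Matrix n n ℝ} {δ : ℝ}
    (h : DiagDominantBy δ M) (hδ : 0 < δ) (z : n → ℝ) : δ * ‖z‖ ≤ ‖M *ᵥ z‖ := by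
  rw [← le_div_iff₀' hδ, pi_norm_le_iff_of_nonneg (by positivity)]
  intro i
  obtain ⟨k, -, hk⟩ := exists_max_image univ (fun j => |z j|) ⟨i, mem_univ i⟩
  set S := ∑ s ∈ univ.erase k, M k s * z s
  have hoff : |S| ≤ (∑ s ∈ univ.erase k, |M k s|) * |z k| := by
    refine (abs_sum_le_sum_abs _ _).trans ?_
    rw [sum_mul]
    exact sum_le_sum fun s _ => by
      rw [abs_mul]; exact mul_le_mul_of_nonneg_left (hk s (mem_univ s)) (abs_nonneg _)
  have hdiag : M k k * |z k| ≤ |(M *ᵥ z) k| + (∑ s ∈ univ.erase k, |M k s|) * |z k| :=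
    calc M k k * |z k| ≤ |M k k * z k| := by
          rw [abs_mul]; exact mul_le_mul_of_nonneg_right (le_abs_self _) (abs_nonneg _)
      _ = |(M *ᵥ z) k + -S| := by rw [mulVec_apply_eq_diag_add_sum_erase, add_neg_cancel_right]
      _ ≤ |(M *ᵥ z) k| + |S| := (abs_add_le _ _).trans_eq (by rw [abs_neg])
      _ ≤ _ := by gcongr
  rw [le_div_iff₀' hδ, Real.norm_eq_abs]
  calc δ * |z i| ≤ δ * |z k| := mul_le_mul_of_nonneg_left (hk i (mem_univ i)) hδ.le
    _ ≤ |(M *ᵥ z) k| := by nlinarith [h k, abs_nonneg (z k)]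
    _ ≤ ‖M *ᵥ z‖ := by rw [← Real.norm_eq_abs]; exact norm_le_pi_norm _ k

end DiagonalDominance

section RowSums

variable {m n : Type*} [Fintype n]

theorem abs_mulVec_apply_le (M : Matrix m n ℝ) (w : n → ℝ) (i : m) :
    |(M *ᵥ w) i| ≤ (∑ j, |M i j|) * ‖w‖ := by
  refine (abs_sum_le_sum_abs _ _).trans ?_
  rw [sum_mul]
  refine sum_le_sum fun j _ => ?_
  rw [abs_mul, ← Real.norm_eq_abs (w j)]
  exact mul_le_mul_of_nonneg_left (norm_le_pi_norm w j) (abs_nonneg _)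

theorem tendsto_mulVec_zero_of_sum_abs_le {ι : Type*} {l : Filter ι} {M : ι → Matrix m n ℝ}
    {w : ι → n → ℝ} {K : ℝ} (hM : ∀ k i, ∑ j, |M k i j| ≤ K) (hw : Tendsto w l (𝓝 0)) :
    Tendsto (fun k => M k *ᵥ w k) l (𝓝 0) := by
  have hK : Tendsto (fun k => K * ‖w k‖) l (𝓝 0) := by
    simpa using (tendsto_norm_zero.comp hw).const_mul K
  refine tendsto_pi_nhds.2 fun i => squeeze_zero_norm (fun k => ?_) hK
  rw [Real.norm_eq_abs]
  exact (abs_mulVec_apply_le _ _ i).trans (mul_le_mul_of_nonneg_right (hM k i) (norm_nonneg _))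

variable [Fintype m]

theorem exists_sum_abs_le_of_continuousOn {X : Type*} [TopologicalSpace X] {s : Set X}
    (hs : IsCompact s) {A : X → Matrix m n ℝ} (hA : ContinuousOn A s) :
    ∃ C, ∀ x ∈ s, ∀ i, ∑ j, |A x i j| ≤ C := by
  have hf : ContinuousOn (fun x => ∑ i, ∑ j, |A x i j|) s :=
    continuousOn_finsetSum _ fun i _ => continuousOn_finsetSum _ fun j _ =>
      ((continuous_id.matrix_elem i j).comp_continuousOn hA).abs
  obtain ⟨C, hC⟩ := hs.exists_bound_of_continuousOn hf
  refine ⟨C, fun x hx i => ?_⟩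
  calc ∑ j, |A x i j| ≤ ∑ i, ∑ j, |A x i j| :=
        single_le_sum (f := fun i => ∑ j, |A x i j|)
          (fun i _ => sum_nonneg fun j _ => abs_nonneg _) (mem_univ i)
    _ ≤ ‖∑ i, ∑ j, |A x i j|‖ := Real.le_norm_self _
    _ ≤ C := hC x hx

end RowSums

theorem exists_tendsto_of_monotone_of_norm_le {ι : Type*} [Fintype ι] {f : ℕ → ι → ℝ}
    (hf : Monotone f) {R : ℝ} (hR : ∀ k, ‖f k‖ ≤ R) : ∃ l, Tendsto f atTop (𝓝 l) :=
  ⟨_, tendsto_atTop_ciSup hf ⟨fun _ => R, by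
    rintro _ ⟨k, rfl⟩ i
    exact (le_abs_self _).trans ((norm_le_pi_norm (f k) i).trans (hR k))⟩⟩

section Hamiltonian

variable {N : ℕ} (𝔄 : ℝ → Matrix (Fin N) (Fin N) ℝ) (𝔅 : ℝ → Fin N → ℝ)
  (umin : (Fin N → ℝ) → Fin N → ℝ)

/-- `max_{u ∈ U} (b_u - A_u y)_i`, read off at the selected control `umin y i`. -/
def hamiltonian (y : Fin N → ℝ) : Fin N → ℝ :=
  fun i => (𝔅 (umin y i) - 𝔄 (umin y i) *ᵥ y) i

def IsMaxSelection (U : Set ℝ) : Prop :=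
  ∀ (y : Fin N → ℝ) (i : Fin N), umin y i ∈ U ∧
    IsGreatest ((fun v => (𝔅 v - 𝔄 v *ᵥ y) i) '' U) (hamiltonian 𝔄 𝔅 umin y i)

variable {𝔄 𝔅 umin}

theorem AminMat_apply (y : Fin N → ℝ) (i j : Fin N) :
    AminMat 𝔄 𝔅 umin y i j =
      if 0 < hamiltonian 𝔄 𝔅 umin y i then 𝔄 (umin y i) i j else 0 :=
  rfl

theorem bminVec_apply (y : Fin N → ℝ) (i : Fin N) :
    bminVec 𝔄 𝔅 umin y i = if 0 < hamiltonian 𝔄 𝔅 umin y i then 𝔅 (umin y i) i else 0 :=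
  rfl

theorem AminMat_row_eq_or (y : Fin N → ℝ) (i : Fin N) :
    AminMat 𝔄 𝔅 umin y i = 𝔄 (umin y i) i ∨ AminMat 𝔄 𝔅 umin y i = 0 := by
  by_cases h : 0 < hamiltonian 𝔄 𝔅 umin y i
  · exact .inl (funext fun j => if_pos h)
  · exact .inr (funext fun j => if_neg h)

theorem AminMat_mulVec_apply (y z : Fin N → ℝ) (i : Fin N) :
    (AminMat 𝔄 𝔅 umin y *ᵥ z) i =
      if 0 < hamiltonian 𝔄 𝔅 umin y i then (𝔄 (umin y i) *ᵥ z) i else 0 := by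
  simp only [mulVec, dotProduct, AminMat_apply]
  split_ifs <;> simp

theorem bminVec_sub_AminMat_mulVec_self (y : Fin N → ℝ) :
    bminVec 𝔄 𝔅 umin y - AminMat 𝔄 𝔅 umin y *ᵥ y =
      fun i => max (hamiltonian 𝔄 𝔅 umin y i) 0 := by
  funext i
  rw [Pi.sub_apply, AminMat_mulVec_apply]
  by_cases h : 0 < hamiltonian 𝔄 𝔅 umin y i
  · rw [bminVec_apply, if_pos h, if_pos h, max_eq_left h.le]; rfl
  · rw [bminVec_apply, if_neg h, if_neg h, max_eq_right (not_lt.1 h), sub_zero]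

variable {U : Set ℝ}

theorem IsMaxSelection.apply_le_hamiltonian (hsel : IsMaxSelection 𝔄 𝔅 umin U) {v : ℝ}
    (hv : v ∈ U) (y : Fin N → ℝ) (i : Fin N) :
    (𝔅 v - 𝔄 v *ᵥ y) i ≤ hamiltonian 𝔄 𝔅 umin y i :=
  (hsel y i).2.2 ⟨v, hv, rfl⟩

theorem IsMaxSelection.bminVec_sub_AminMat_mulVec_le (hsel : IsMaxSelection 𝔄 𝔅 umin U)
    (y z : Fin N → ℝ) :
    bminVec 𝔄 𝔅 umin y - AminMat 𝔄 𝔅 umin y *ᵥ z ≤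
      fun i => max (hamiltonian 𝔄 𝔅 umin z i) 0 := by
  intro i
  rw [Pi.sub_apply, AminMat_mulVec_apply, bminVec_apply]
  split_ifs
  · exact (hsel.apply_le_hamiltonian (hsel y i).1 z i).trans (le_max_left _ _)
  · rw [sub_zero]; exact le_max_right _ _

theorem IsMaxSelection.sSup_image_max_eq (hsel : IsMaxSelection 𝔄 𝔅 umin U) (y : Fin N → ℝ)
    (i : Fin N) :
    sSup ((fun u => max ((𝔅 u - 𝔄 u *ᵥ y) i) 0) '' U) = max (hamiltonian 𝔄 𝔅 umin y i) 0 := by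
  refine IsGreatest.csSup_eq ⟨⟨umin y i, (hsel y i).1, rfl⟩, ?_⟩
  rintro _ ⟨v, hv, rfl⟩
  exact max_le_max (hsel.apply_le_hamiltonian hv y i) le_rfl

theorem IsMaxSelection.continuous_hamiltonian (hsel : IsMaxSelection 𝔄 𝔅 umin U) {C : ℝ}
    (hC : ∀ v ∈ U, ∀ i, ∑ j, |𝔄 v i j| ≤ C) : Continuous (hamiltonian 𝔄 𝔅 umin) := by
  refine continuous_pi fun i => (LipschitzWith.of_le_add_mul' C fun y z => ?_).continuous
  obtain ⟨hv, -⟩ := hsel y i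
  have hdiff : hamiltonian 𝔄 𝔅 umin y i - (𝔅 (umin y i) - 𝔄 (umin y i) *ᵥ z) i =
      (𝔄 (umin y i) *ᵥ (z - y)) i := by
    simp only [hamiltonian, Pi.sub_apply, mulVec_sub]; ring
  have hrow := (abs_mulVec_apply_le (𝔄 (umin y i)) (z - y) i).trans
    (mul_le_mul_of_nonneg_right (hC _ hv i) (norm_nonneg _))
  rw [dist_eq_norm, ← norm_neg, neg_sub]
  linarith [hsel.apply_le_hamiltonian hv z i, le_abs_self ((𝔄 (umin y i) *ᵥ (z - y)) i)]

end Hamiltonian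

section NewtonIteration

variable {N : ℕ} {𝔄 : ℝ → Matrix (Fin N) (Fin N) ℝ} {𝔅 : ℝ → Fin N → ℝ}
  {umin : (Fin N → ℝ) → Fin N → ℝ} {U : Set ℝ} {u₀ ρ δ C : ℝ}

theorem IsMaxSelection.isZMatrix_AminMat (hsel : IsMaxSelection 𝔄 𝔅 umin U)
    (hK : ∀ v ∈ U, KoMat (𝔄 v)) (y : Fin N → ℝ) : IsZMatrix (AminMat 𝔄 𝔅 umin y) :=
  fun r s hrs => by
    rcases AminMat_row_eq_or y r with h | h <;> rw [h]
    · exact (hK _ (hsel y r).1).1 r s hrs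
    · rfl

theorem IsMaxSelection.diagDominantBy_zero_AminMat (hsel : IsMaxSelection 𝔄 𝔅 umin U)
    (hK : ∀ v ∈ U, KoMat (𝔄 v)) (y : Fin N → ℝ) : DiagDominantBy 0 (AminMat 𝔄 𝔅 umin y) :=
  fun r => by
    rcases AminMat_row_eq_or y r with h | h <;> rw [h]
    · simpa using ((hK _ (hsel y r).1).2 r).le
    · simp

theorem IsMaxSelection.sum_abs_AminMat_le (hsel : IsMaxSelection 𝔄 𝔅 umin U)
    (hC : ∀ v ∈ U, ∀ i, ∑ j, |𝔄 v i j| ≤ C) (y : Fin N → ℝ) (i : Fin N) :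
    ∑ j, |AminMat 𝔄 𝔅 umin y i j| ≤ C := by
  rcases AminMat_row_eq_or y i with h | h <;> rw [h]
  · exact hC _ (hsel y i).1 i
  · simpa using (sum_nonneg fun j _ => abs_nonneg _).trans (hC _ (hsel y i).1 i)

theorem IsMaxSelection.norm_bminVec_le (hsel : IsMaxSelection 𝔄 𝔅 umin U) {Cb : ℝ}
    (hCb : ∀ v ∈ U, ‖𝔅 v‖ ≤ Cb) (hCb₀ : 0 ≤ Cb) (y : Fin N → ℝ) :
    ‖bminVec 𝔄 𝔅 umin y‖ ≤ Cb := by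
  refine (pi_norm_le_iff_of_nonneg hCb₀).2 fun i => ?_
  rw [bminVec_apply]
  split_ifs
  · exact (norm_le_pi_norm _ i).trans (hCb _ (hsel y i).1)
  · simpa using hCb₀

variable (𝔄 𝔅 umin) in
noncomputable def newtonMat (u₀ ρ : ℝ) (y : Fin N → ℝ) : Matrix (Fin N) (Fin N) ℝ :=
  𝔄 u₀ + ρ • AminMat 𝔄 𝔅 umin y

variable (𝔄 𝔅 umin) in
def IsNewtonStep (u₀ ρ : ℝ) (y z : Fin N → ℝ) : Prop :=
  newtonMat 𝔄 𝔅 umin u₀ ρ y *ᵥ z = 𝔅 u₀ + ρ • bminVec 𝔄 𝔅 umin y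

variable (𝔄 𝔅 umin) in
def penalizedResidual (u₀ ρ : ℝ) (y : Fin N → ℝ) : Fin N → ℝ :=
  𝔄 u₀ *ᵥ y - 𝔅 u₀ - ρ • fun i => max (hamiltonian 𝔄 𝔅 umin y i) 0

theorem IsMaxSelection.isZMatrix_newtonMat (hsel : IsMaxSelection 𝔄 𝔅 umin U)
    (hK : ∀ v ∈ U, KoMat (𝔄 v)) (hu₀ : u₀ ∈ U) (hρ : 0 ≤ ρ) (y : Fin N → ℝ) :
    IsZMatrix (newtonMat 𝔄 𝔅 umin u₀ ρ y) :=
  IsZMatrix.add_smul (hK u₀ hu₀).1 (hsel.isZMatrix_AminMat hK y) hρ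

theorem IsMaxSelection.diagDominantBy_newtonMat (hsel : IsMaxSelection 𝔄 𝔅 umin U)
    (hK : ∀ v ∈ U, KoMat (𝔄 v)) (hu₀ : u₀ ∈ U) (hρ : 0 ≤ ρ) (hA₀ : DiagDominantBy δ (𝔄 u₀))
    (y : Fin N → ℝ) : DiagDominantBy δ (newtonMat 𝔄 𝔅 umin u₀ ρ y) :=
  hA₀.add_smul (hK u₀ hu₀).1 (hsel.diagDominantBy_zero_AminMat hK y)
    (hsel.isZMatrix_AminMat hK y) hρ

theorem IsMaxSelection.sum_abs_newtonMat_le (hsel : IsMaxSelection 𝔄 𝔅 umin U)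
    (hC : ∀ v ∈ U, ∀ i, ∑ j, |𝔄 v i j| ≤ C) (hu₀ : u₀ ∈ U) (hρ : 0 ≤ ρ) (y : Fin N → ℝ)
    (i : Fin N) : ∑ j, |newtonMat 𝔄 𝔅 umin u₀ ρ y i j| ≤ C + ρ * C :=
  calc ∑ j, |newtonMat 𝔄 𝔅 umin u₀ ρ y i j|
      ≤ ∑ j, (|𝔄 u₀ i j| + ρ * |AminMat 𝔄 𝔅 umin y i j|) := sum_le_sum fun j _ =>
        (abs_add_le _ _).trans_eq (by rw [Matrix.smul_apply, smul_eq_mul, abs_mul, abs_of_nonneg hρ])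
    _ = ∑ j, |𝔄 u₀ i j| + ρ * ∑ j, |AminMat 𝔄 𝔅 umin y i j| := by rw [sum_add_distrib, mul_sum]
    _ ≤ C + ρ * C :=
        add_le_add (hC u₀ hu₀ i) (mul_le_mul_of_nonneg_left (hsel.sum_abs_AminMat_le hC y i) hρ)

variable {y z w : Fin N → ℝ}

theorem IsNewtonStep.newtonMat_mulVec_sub (h : IsNewtonStep 𝔄 𝔅 umin u₀ ρ y z) :
    newtonMat 𝔄 𝔅 umin u₀ ρ y *ᵥ (y - z) = penalizedResidual 𝔄 𝔅 umin u₀ ρ y := by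
  rw [mulVec_sub, h, penalizedResidual, ← bminVec_sub_AminMat_mulVec_self, newtonMat, add_mulVec,
    smul_mulVec, smul_sub]
  abel

theorem IsNewtonStep.penalizedResidual_nonpos (hsel : IsMaxSelection 𝔄 𝔅 umin U) (hρ : 0 ≤ ρ)
    (h : IsNewtonStep 𝔄 𝔅 umin u₀ ρ y z) : penalizedResidual 𝔄 𝔅 umin u₀ ρ z ≤ 0 := by
  have hz : 𝔄 u₀ *ᵥ z - 𝔅 u₀ = ρ • (bminVec 𝔄 𝔅 umin y - AminMat 𝔄 𝔅 umin y *ᵥ z) := by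
    rw [smul_sub, ← smul_mulVec, eq_sub_iff_add_eq, sub_add_eq_add_sub, ← add_mulVec]
    exact sub_eq_iff_eq_add'.2 h
  rw [penalizedResidual, hz, sub_nonpos]
  exact smul_le_smul_of_nonneg_left (hsel.bminVec_sub_AminMat_mulVec_le y z) hρ

/-- Monotonicity of the iteration: after one step the residual is `≤ 0`, so the next increment
solves a system with nonnegative right-hand side. -/
theorem IsNewtonStep.le_of_isNewtonStep (hsel : IsMaxSelection 𝔄 𝔅 umin U) (hK : ∀ v ∈ U, KoMat (𝔄 v))
    (hu₀ : u₀ ∈ U) (hρ : 0 ≤ ρ) (h₁ : IsNewtonStep 𝔄 𝔅 umin u₀ ρ y z)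
    (h₂ : IsNewtonStep 𝔄 𝔅 umin u₀ ρ z w) : z ≤ w := by
  obtain ⟨δ, hδ, hA₀⟩ := exists_diagDominantBy_of_sum_abs_lt (hK u₀ hu₀).2
  have hinc : 0 ≤ newtonMat 𝔄 𝔅 umin u₀ ρ z *ᵥ (w - z) := by
    rw [← neg_sub, mulVec_neg, h₂.newtonMat_mulVec_sub, neg_nonneg]
    exact h₁.penalizedResidual_nonpos hsel hρ
  exact sub_nonneg.1 <| (hsel.isZMatrix_newtonMat hK hu₀ hρ z).nonneg_of_nonneg_mulVec
    ((hsel.diagDominantBy_newtonMat hK hu₀ hρ hA₀ z).sum_abs_lt hδ) hinc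

theorem IsNewtonStep.mul_norm_le (hsel : IsMaxSelection 𝔄 𝔅 umin U) (hK : ∀ v ∈ U, KoMat (𝔄 v))
    (hu₀ : u₀ ∈ U) (hρ : 0 ≤ ρ) (hA₀ : DiagDominantBy δ (𝔄 u₀)) (hδ : 0 < δ) {Cb : ℝ}
    (hCb : ∀ v ∈ U, ‖𝔅 v‖ ≤ Cb) (h : IsNewtonStep 𝔄 𝔅 umin u₀ ρ y z) :
    δ * ‖z‖ ≤ (1 + ρ) * Cb :=
  have hCb₀ : 0 ≤ Cb := (norm_nonneg _).trans (hCb u₀ hu₀)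
  calc δ * ‖z‖ ≤ ‖newtonMat 𝔄 𝔅 umin u₀ ρ y *ᵥ z‖ :=
        (hsel.diagDominantBy_newtonMat hK hu₀ hρ hA₀ y).mul_norm_le_norm_mulVec hδ z
    _ = ‖𝔅 u₀ + ρ • bminVec 𝔄 𝔅 umin y‖ := by rw [h]
    _ ≤ ‖𝔅 u₀‖ + ρ * ‖bminVec 𝔄 𝔅 umin y‖ :=
        (norm_add_le _ _).trans_eq (by rw [norm_smul, Real.norm_of_nonneg hρ])
    _ ≤ Cb + ρ * Cb :=
        add_le_add (hCb u₀ hu₀) (mul_le_mul_of_nonneg_left (hsel.norm_bminVec_le hCb hCb₀ y) hρ)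
    _ = (1 + ρ) * Cb := by ring

theorem IsMaxSelection.continuous_penalizedResidual (hsel : IsMaxSelection 𝔄 𝔅 umin U)
    (hC : ∀ v ∈ U, ∀ i, ∑ j, |𝔄 v i j| ≤ C) :
    Continuous (penalizedResidual 𝔄 𝔅 umin u₀ ρ) := by
  refine ((continuous_const.matrix_mulVec continuous_id).sub continuous_const).sub
    ((continuous_pi fun i => ?_).const_smul ρ)
  exact ((continuous_apply i).comp (hsel.continuous_hamiltonian hC)).max continuous_const

/-- `penalizedResidual (x n) = newtonMat (x n) *ᵥ (x n - x (n + 1))`, and the Newton matrices are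
uniformly bounded. -/
theorem IsMaxSelection.penalizedResidual_eq_zero_of_tendsto (hsel : IsMaxSelection 𝔄 𝔅 umin U)
    (hC : ∀ v ∈ U, ∀ i, ∑ j, |𝔄 v i j| ≤ C) (hu₀ : u₀ ∈ U) (hρ : 0 ≤ ρ) {x : ℕ → Fin N → ℝ}
    (hx : ∀ n, IsNewtonStep 𝔄 𝔅 umin u₀ ρ (x n) (x (n + 1))) {xρ : Fin N → ℝ}
    (hlim : Tendsto x atTop (𝓝 xρ)) : penalizedResidual 𝔄 𝔅 umin u₀ ρ xρ = 0 := by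
  have hdiff : Tendsto (fun n => x n - x (n + 1)) atTop (𝓝 0) := by
    simpa using hlim.sub ((tendsto_add_atTop_iff_nat 1).2 hlim)
  have hzero : Tendsto (fun n => penalizedResidual 𝔄 𝔅 umin u₀ ρ (x n)) atTop (𝓝 0) := by
    simpa only [(hx _).newtonMat_mulVec_sub] using tendsto_mulVec_zero_of_sum_abs_le
      (fun n => hsel.sum_abs_newtonMat_le hC hu₀ hρ (x n)) hdiff
  exact tendsto_nhds_unique (((hsel.continuous_penalizedResidual hC).tendsto xρ).comp hlim) hzero

end NewtonIteration

theorem newton_like_HJB_converges_general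
    (N : ℕ) (a b : ℝ)
    (𝔄 : ℝ → Matrix (Fin N) (Fin N) ℝ) (𝔅 : ℝ → (Fin N → ℝ))
    (hAcont : ContinuousOn 𝔄 (Set.Icc a b)) (hbcont : ContinuousOn 𝔅 (Set.Icc a b))
    (hKo : ∀ u ∈ Set.Icc a b, KoMat (𝔄 u))
    (u₀ : ℝ) (hu₀ : u₀ ∈ Set.Icc a b) (ρ : ℝ) (hρ : 0 < ρ)
    (umin : (Fin N → ℝ) → Fin N → ℝ)
    (hsel : ∀ (y : Fin N → ℝ) (i : Fin N), umin y i ∈ Set.Icc a b ∧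
      IsGreatest ((fun v => (𝔅 v - 𝔄 v *ᵥ y) i) '' Set.Icc a b)
        ((𝔅 (umin y i) - 𝔄 (umin y i) *ᵥ y) i))
    (x : ℕ → (Fin N → ℝ))
    (hiter : ∀ n : ℕ,
      (𝔄 u₀ + ρ • AminMat 𝔄 𝔅 umin (x n)) *ᵥ x (n + 1) =
        𝔅 u₀ + ρ • bminVec 𝔄 𝔅 umin (x n)) :
    ∃ xρ : Fin N → ℝ,
      Tendsto x atTop (nhds xρ) ∧
      ∀ i : Fin N,
        (𝔄 u₀ *ᵥ xρ - 𝔅 u₀) i -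
          ρ * sSup ((fun u => max ((𝔅 u - 𝔄 u *ᵥ xρ) i) 0) '' Set.Icc a b) = 0 := by
  have hsel : IsMaxSelection 𝔄 𝔅 umin (Set.Icc a b) := hsel
  have hstep : ∀ n, IsNewtonStep 𝔄 𝔅 umin u₀ ρ (x n) (x (n + 1)) := hiter
  obtain ⟨δ, hδ, hA₀⟩ := exists_diagDominantBy_of_sum_abs_lt (hKo u₀ hu₀).2
  obtain ⟨C, hC⟩ := exists_sum_abs_le_of_continuousOn isCompact_Icc hAcont
  obtain ⟨Cb, hCb⟩ := isCompact_Icc.exists_bound_of_continuousOn hbcont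
  have hmono : Monotone fun n => x (n + 1) :=
    monotone_nat_of_le_succ fun n => (hstep n).le_of_isNewtonStep hsel hKo hu₀ hρ.le (hstep (n + 1))
  have hbdd : ∀ n, ‖x (n + 1)‖ ≤ (1 + ρ) * Cb / δ := fun n =>
    (le_div_iff₀' hδ).2 ((hstep n).mul_norm_le hsel hKo hu₀ hρ.le hA₀ hδ hCb)
  obtain ⟨xρ, hxρ⟩ := exists_tendsto_of_monotone_of_norm_le hmono hbdd
  have hlim : Tendsto x atTop (𝓝 xρ) := (tendsto_add_atTop_iff_nat 1).1 hxρ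
  have hres := congrFun (hsel.penalizedResidual_eq_zero_of_tendsto hC hu₀ hρ.le hstep hlim)
  refine ⟨xρ, hlim, fun i => ?_⟩
  rw [hsel.sSup_image_max_eq]
  simpa [penalizedResidual] using hres i

/-- For every starting value, the Newton-like iteration for the penalised HJB
equation (with `Π(y) = max{y,0}`) converges to a limit solving the penalised
HJB equation. -/
theorem newton_like_HJB_converges
    (N : ℕ) (hN : 0 < N) (a b : ℝ) (hab : a ≤ b)
    (𝔄 : ℝ → Matrix (Fin N) (Fin N) ℝ) (𝔅 : ℝ → (Fin N → ℝ))
    (hAcont : ContinuousOn 𝔄 (Set.Icc a b)) (hbcont : ContinuousOn 𝔅 (Set.Icc a b))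
    (hKo : ∀ u ∈ Set.Icc a b, KoMat (𝔄 u))
    (u₀ : ℝ) (hu₀ : u₀ ∈ Set.Icc a b) (ρ : ℝ) (hρ : 0 < ρ)
    (umin : (Fin N → ℝ) → Fin N → ℝ)
    (hsel : ∀ (y : Fin N → ℝ) (i : Fin N), umin y i ∈ Set.Icc a b ∧
      IsGreatest ((fun v => (𝔅 v - 𝔄 v *ᵥ y) i) '' Set.Icc a b)
        ((𝔅 (umin y i) - 𝔄 (umin y i) *ᵥ y) i))
    (x : ℕ → (Fin N → ℝ))
    (hiter : ∀ n : ℕ,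
      (𝔄 u₀ + ρ • AminMat 𝔄 𝔅 umin (x n)) *ᵥ x (n + 1) =
        𝔅 u₀ + ρ • bminVec 𝔄 𝔅 umin (x n)) :
    ∃ xρ : Fin N → ℝ,
      Tendsto x atTop (nhds xρ) ∧
      ∀ i : Fin N,
        (𝔄 u₀ *ᵥ xρ - 𝔅 u₀) i -
          ρ * sSup ((fun u => max ((𝔅 u - 𝔄 u *ᵥ xρ) i) 0) '' Set.Icc a b) = 0 :=
  newton_like_HJB_converges_general N a b 𝔄 𝔅 hAcont hbcont hKo u₀ hu₀ ρ hρ umin hsel x hiter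
end
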